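/- arXiv:2602.22672 — 7 statements merged into one kernel-verified Lean document; each statement's English description precedes it below -/
import Mathlib

section
/- Let w : ℝ → ℝ be a twice continuously differentiable even function satisfying -w''(r) + w(r) = w(r)³ for all r ∈ ℝ, and suppose there exist constants C, η > 0 such that |w(r)| + |w'(r)| ≤ C·e^{-η|r|} for all r ∈ ℝ. Then 3·∫₀^∞ w(r)⁴ dr = 4·∫₀^∞ w(r)² dr and 4·∫₀^∞ w(r)² dr = 12·∫₀^∞ |w'(r)|² dr. -/
/-!
Multiplying the equation by `w'` shows that the energy `w'² - w² + w⁴/2` is constant, and the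
decay of `w` and `w'` forces it to vanish. Multiplying the equation by `w` and integrating by parts
over `(0, ∞)` gives `∫ w'² + ∫ w² = ∫ w⁴`: the boundary term `w w'` vanishes at infinity by decay
and at `0` because `w'` is odd. Integrating the energy identity gives `∫ w'² = ∫ w² - ½ ∫ w⁴`, and
the two relations combine to the claim.
-/

open MeasureTheory Filter Topology Asymptotics Real Set

lemma Function.Even.deriv_zero {F : Type*} [NormedAddCommGroup F] [NormedSpace ℝ F] {f : ℝ → F}
    (hf : f.Even) : deriv f 0 = 0 := by
  have h := deriv_comp_neg f (0 : ℝ)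
  rw [funext hf, neg_zero] at h
  have htwo : (2 : ℝ) • deriv f 0 = 0 := by
    rw [two_smul]
    nth_rewrite 1 [h]
    exact neg_add_cancel _
  exact (smul_eq_zero.mp htwo).resolve_left two_ne_zero

lemma eq_zero_of_hasDerivAt_zero_of_tendsto {E : Type*} [NormedAddCommGroup E] [NormedSpace ℝ E]
    {f : ℝ → E} {l : Filter ℝ} [l.NeBot] (hf : ∀ x, HasDerivAt f 0 x)
    (hlim : Tendsto f l (𝓝 0)) (x : ℝ) : f x = 0 := by
  have hconst : f = fun _ => f x :=
    funext fun y => is_const_of_deriv_eq_zero (fun z => (hf z).differentiableAt)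
      (fun z => (hf z).deriv) y x
  exact tendsto_nhds_unique (hconst ▸ tendsto_const_nhds) hlim

theorem hasDerivAt_energy {u V V' : ℝ → ℝ} (hu : Differentiable ℝ u)
    (hu' : Differentiable ℝ (deriv u)) (hV : ∀ x, HasDerivAt V (V' x) x)
    (hode : ∀ r, deriv (deriv u) r = V' (u r)) (r : ℝ) :
    HasDerivAt (fun r => deriv u r ^ 2 / 2 - V (u r)) 0 r := by
  refine ((((hu' r).hasDerivAt.pow 2).div_const 2).sub
    ((hV (u r)).comp r (hu r).hasDerivAt)).congr_deriv ?_
  rw [hode]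
  ring

theorem integral_Ioi_deriv_sq_add_mul_deriv_deriv {u : ℝ → ℝ} {a : ℝ} (hu : Differentiable ℝ u)
    (hu' : Differentiable ℝ (deriv u))
    (hint : IntegrableOn (fun r => deriv u r ^ 2 + u r * deriv (deriv u) r) (Ioi a))
    (hlim : Tendsto (fun r => u r * deriv u r) atTop (𝓝 0)) :
    ∫ r in Ioi a, (deriv u r ^ 2 + u r * deriv (deriv u) r) = -(u a * deriv u a) := by
  rw [integral_Ioi_of_hasDerivAt_of_tendsto' (fun r _ => ?_) hint hlim, zero_sub]
  exact ((hu r).hasDerivAt.mul (hu' r).hasDerivAt).congr_deriv (by ring)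

lemma isBigO_exp_of_abs_le {f : ℝ → ℝ} {C η : ℝ} (h : ∀ r, |f r| ≤ C * exp (-η * |r|)) :
    f =O[atTop] fun r => exp (-η * r) := by
  refine IsBigO.of_bound C ?_
  filter_upwards [eventually_ge_atTop 0] with r hr
  simpa [abs_of_nonneg hr] using h r

lemma tendsto_zero_of_isBigO_exp {E : Type*} [NormedAddCommGroup E] {f : ℝ → E} {η : ℝ}
    (hη : 0 < η) (hf : f =O[atTop] fun r => exp (-η * r)) : Tendsto f atTop (𝓝 0) :=
  hf.trans_tendsto <| tendsto_exp_comp_nhds_zero.mpr <|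
    tendsto_id.const_mul_atTop_of_neg (neg_neg_of_pos hη)

lemma integrableOn_Ioi_pow_of_isBigO_exp {f : ℝ → ℝ} {a b : ℝ} {n : ℕ} (hb : 0 < b) (hn : n ≠ 0)
    (hf : Continuous f) (hfO : f =O[atTop] fun x => exp (-b * x)) :
    IntegrableOn (fun x => f x ^ n) (Ioi a) := by
  obtain ⟨m, rfl⟩ := Nat.exists_eq_succ_of_ne_zero hn
  have hbdd : (fun x => f x ^ m) =O[atTop] fun _ => (1 : ℝ) :=
    ((tendsto_zero_of_isBigO_exp hb hfO).pow m).isBigO_one ℝ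
  simp_rw [pow_succ']
  exact integrable_of_isBigO_exp_neg hb (hf.mul (hf.pow m)).continuousOn
    (by simpa using hfO.mul hbdd)

theorem deriv_sq_eq_of_tendsto_zero {u : ℝ → ℝ} (hu : Differentiable ℝ u)
    (hu' : Differentiable ℝ (deriv u)) (hode : ∀ r, deriv (deriv u) r = u r - u r ^ 3)
    (hlim : Tendsto u atTop (𝓝 0)) (hlim' : Tendsto (deriv u) atTop (𝓝 0)) (r : ℝ) :
    deriv u r ^ 2 = u r ^ 2 - u r ^ 4 / 2 := by
  have hV (x : ℝ) : HasDerivAt (fun x => x ^ 2 / 2 - x ^ 4 / 4) (x - x ^ 3) x :=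
    (((hasDerivAt_pow 2 x).div_const 2).sub ((hasDerivAt_pow 4 x).div_const 4)).congr_deriv
      (by ring)
  have hlimEnergy :
      Tendsto (fun r => deriv u r ^ 2 / 2 - (u r ^ 2 / 2 - u r ^ 4 / 4)) atTop (𝓝 0) := by
    simpa using ((hlim'.pow 2).div_const 2).sub (((hlim.pow 2).div_const 2).sub
      ((hlim.pow 4).div_const 4))
  linarith [eq_zero_of_hasDerivAt_zero_of_tendsto (hasDerivAt_energy hu hu' hV hode) hlimEnergy r]

theorem three_mul_integral_Ioi_pow_four_eq {u : ℝ → ℝ} (hu : Differentiable ℝ u)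
    (hu' : Differentiable ℝ (deriv u)) (hode : ∀ r, deriv (deriv u) r = u r - u r ^ 3)
    (hlim : Tendsto u atTop (𝓝 0)) (hlim' : Tendsto (deriv u) atTop (𝓝 0)) (h0 : deriv u 0 = 0)
    (hint2 : IntegrableOn (fun r => u r ^ 2) (Ioi 0))
    (hint4 : IntegrableOn (fun r => u r ^ 4) (Ioi 0)) :
    3 * ∫ r in Ioi 0, u r ^ 4 = 4 * ∫ r in Ioi 0, u r ^ 2 := by
  have hintegrand : (fun r => deriv u r ^ 2 + u r * deriv (deriv u) r) =
      fun r => 2 * u r ^ 2 - 3 / 2 * u r ^ 4 := by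
    funext r
    rw [deriv_sq_eq_of_tendsto_zero hu hu' hode hlim hlim', hode]
    ring
  have hint : IntegrableOn (fun r => 2 * u r ^ 2 - 3 / 2 * u r ^ 4) (Ioi 0) :=
    (hint2.const_mul 2).sub (hint4.const_mul _)
  have hparts := integral_Ioi_deriv_sq_add_mul_deriv_deriv hu hu' (hintegrand ▸ hint)
    (by simpa using hlim.mul hlim')
  rw [h0, mul_zero, neg_zero, hintegrand, integral_sub (hint2.const_mul 2) (hint4.const_mul _),
    integral_const_mul, integral_const_mul] at hparts
  linarith

theorem pohozaev_single (w : ℝ → ℝ)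
    (hw : ContDiff ℝ 2 w)
    (heven : ∀ r : ℝ, w (-r) = w r)
    (hode : ∀ r : ℝ, -(deriv (deriv w) r) + w r = (w r) ^ 3)
    (hdecay : ∃ C > (0:ℝ), ∃ η > (0:ℝ), ∀ r : ℝ,
      |w r| + |deriv w r| ≤ C * Real.exp (-η * |r|)) :
    3 * (∫ r in Set.Ioi (0:ℝ), (w r) ^ 4) = 4 * (∫ r in Set.Ioi (0:ℝ), (w r) ^ 2) ∧
    4 * (∫ r in Set.Ioi (0:ℝ), (w r) ^ 2) =
      12 * (∫ r in Set.Ioi (0:ℝ), |deriv w r| ^ 2) := by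
  obtain ⟨C, -, η, hη, hbd⟩ := hdecay
  have hw₁ : Differentiable ℝ w := hw.differentiable (by norm_num)
  have hw₂ : Differentiable ℝ (deriv w) := hw.differentiable_deriv_two
  have hw'' (r : ℝ) : deriv (deriv w) r = w r - w r ^ 3 := by linarith [hode r]
  have hwO : w =O[atTop] fun r => exp (-η * r) :=
    isBigO_exp_of_abs_le fun r => (le_add_of_nonneg_right (abs_nonneg _)).trans (hbd r)
  have hw'O : deriv w =O[atTop] fun r => exp (-η * r) :=
    isBigO_exp_of_abs_le fun r => (le_add_of_nonneg_left (abs_nonneg _)).trans (hbd r)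
  have hwlim := tendsto_zero_of_isBigO_exp hη hwO
  have hw'lim := tendsto_zero_of_isBigO_exp hη hw'O
  have hint2 := integrableOn_Ioi_pow_of_isBigO_exp (a := 0) hη two_ne_zero hw.continuous hwO
  have hint4 := integrableOn_Ioi_pow_of_isBigO_exp (a := 0) hη four_ne_zero hw.continuous hwO
  have hkinetic : ∫ r in Ioi 0, |deriv w r| ^ 2 = ∫ r in Ioi 0, (w r ^ 2 - w r ^ 4 / 2) := by
    simp_rw [sq_abs, deriv_sq_eq_of_tendsto_zero hw₁ hw₂ hw'' hwlim hw'lim]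
  rw [integral_sub hint2 (hint4.div_const 2), integral_div] at hkinetic
  have hpow := three_mul_integral_Ioi_pow_four_eq hw₁ hw₂ hw'' hwlim hw'lim
    (Function.Even.deriv_zero heven) hint2 hint4
  exact ⟨hpow, by linarith⟩
end

section
/- Let α, β, γ ∈ ℝ and let U, V : ℝ → ℝ be twice continuously differentiable even functions satisfying -U''(r) + U(r) = α·U(r)³ + β·U(r)·V(r)² and -V''(r) + V(r) = γ·V(r)³ + β·U(r)²·V(r) for all r ∈ ℝ, and suppose there exist constants C, η > 0 such that |U(r)| + |U'(r)| + |V(r)| + |V'(r)| ≤ C·e^{-η|r|} for all r ∈ ℝ. Then ∫₀^∞ (U(r)² + V(r)²) dr = 3·∫₀^∞ (|U'(r)|² + |V'(r)|²) dr. -/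
/-!
Multiplying the equations by `U'` and `V'` shows that the energy
`(U'² + V'²)/2 - (U² + V²)/2 + α/4 U⁴ + β/2 U²V² + γ/4 V⁴` is constant, hence zero because
everything decays at infinity. Multiplying them instead by `U` and `V` gives
`(U'U + V'V)' = U'² + V'² + U² + V² - (αU⁴ + 2βU²V² + γV⁴)`, which by the vanishing of the
energy equals `3(U'² + V'²) - (U² + V²)`. Integrating over `(0, ∞)`, the boundary term
`U'U + V'V` vanishes at infinity by decay and at `0` by evenness.
-/

open MeasureTheory Set Filter Topology Real

theorem Function.Even.deriv {𝕜 F : Type*} [NontriviallyNormedField 𝕜] [NormedAddCommGroup F]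
    [NormedSpace 𝕜 F] {f : 𝕜 → F} (hf : f.Even) : (deriv f).Odd := fun x => by
  have h := deriv_comp_neg f x
  rw [funext hf] at h
  rw [h, neg_neg]

section ExponentialDecay

variable {f : ℝ → ℝ} {C η : ℝ}

theorem tendsto_atTop_zero_of_abs_le_exp (hη : 0 < η) (hf : ∀ r, |f r| ≤ C * exp (-η * |r|)) :
    Tendsto f atTop (𝓝 0) := by
  have hexp : Tendsto (fun r => C * exp (-η * r)) atTop (𝓝 0) := by
    simpa using (tendsto_exp_atBot.comp
      (tendsto_id.const_mul_atTop_of_neg (neg_neg_of_pos hη))).const_mul C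
  refine squeeze_zero_norm' ?_ hexp
  filter_upwards [eventually_ge_atTop 0] with r hr
  simpa [abs_of_nonneg hr] using hf r

theorem integrableOn_Ioi_sq_of_abs_le_exp (hf : Continuous f) (hη : 0 < η)
    (hb : ∀ r, |f r| ≤ C * exp (-η * |r|)) : IntegrableOn (fun r => f r ^ 2) (Ioi 0) := by
  refine ((exp_neg_integrableOn_Ioi 0 (mul_pos two_pos hη)).const_mul (C ^ 2)).mono'
    (hf.pow 2).aestronglyMeasurable.restrict ?_
  filter_upwards [ae_restrict_mem measurableSet_Ioi] with r (hr : 0 < r)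
  calc ‖f r ^ 2‖ = |f r| ^ 2 := by simp
    _ ≤ (C * exp (-η * r)) ^ 2 := by gcongr; simpa [abs_of_pos hr] using hb r
    _ = C ^ 2 * exp (-(2 * η) * r) := by rw [mul_pow, sq (exp _), ← exp_add]; ring_nf

end ExponentialDecay

section CoupledSystem

variable {α β γ : ℝ} {U V : ℝ → ℝ}

noncomputable def systemEnergy (α β γ : ℝ) (U V : ℝ → ℝ) (r : ℝ) : ℝ :=
  (deriv U r ^ 2 + deriv V r ^ 2) / 2 - (U r ^ 2 + V r ^ 2) / 2
    + (α / 4 * U r ^ 4 + β / 2 * U r ^ 2 * V r ^ 2 + γ / 4 * V r ^ 4)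

theorem hasDerivAt_systemEnergy (hU : ContDiff ℝ 2 U) (hV : ContDiff ℝ 2 V)
    (hUode : ∀ r, -(deriv (deriv U) r) + U r = α * U r ^ 3 + β * U r * V r ^ 2)
    (hVode : ∀ r, -(deriv (deriv V) r) + V r = γ * V r ^ 3 + β * U r ^ 2 * V r) (r : ℝ) :
    HasDerivAt (systemEnergy α β γ U V) 0 r := by
  have hU₁ := (hU.differentiable two_ne_zero r).hasDerivAt
  have hV₁ := (hV.differentiable two_ne_zero r).hasDerivAt
  have hU₂ := ((hU.deriv' (n := 1)).differentiable one_ne_zero r).hasDerivAt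
  have hV₂ := ((hV.deriv' (n := 1)).differentiable one_ne_zero r).hasDerivAt
  have H := ((((hU₂.pow 2).add (hV₂.pow 2)).div_const 2).sub
      (((hU₁.pow 2).add (hV₁.pow 2)).div_const 2)).add
      ((((hU₁.pow 4).const_mul (α / 4)).add
        (((hU₁.pow 2).mul (hV₁.pow 2)).const_mul (β / 2))).add
        ((hV₁.pow 4).const_mul (γ / 4)))
  refine (H.congr_deriv ?_).congr_of_eventuallyEq (.of_forall fun s => ?_)
  · simp only [Nat.cast_ofNat, Pi.pow_apply]
    linear_combination (-deriv U r) * hUode r - deriv V r * hVode r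
  · simp only [systemEnergy, Pi.add_apply, Pi.sub_apply, Pi.pow_apply, Pi.mul_apply]
    ring

theorem systemEnergy_eq_zero (hU : ContDiff ℝ 2 U) (hV : ContDiff ℝ 2 V)
    (hUode : ∀ r, -(deriv (deriv U) r) + U r = α * U r ^ 3 + β * U r * V r ^ 2)
    (hVode : ∀ r, -(deriv (deriv V) r) + V r = γ * V r ^ 3 + β * U r ^ 2 * V r)
    (tU : Tendsto U atTop (𝓝 0)) (tV : Tendsto V atTop (𝓝 0))
    (tU' : Tendsto (deriv U) atTop (𝓝 0)) (tV' : Tendsto (deriv V) atTop (𝓝 0)) (r : ℝ) :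
    systemEnergy α β γ U V r = 0 := by
  have hE' := hasDerivAt_systemEnergy hU hV hUode hVode
  have hconst : ∀ s, systemEnergy α β γ U V s = systemEnergy α β γ U V r := fun s =>
    is_const_of_deriv_eq_zero (fun s => (hE' s).differentiableAt) (fun s => (hE' s).deriv) s r
  have hlim : Tendsto (systemEnergy α β γ U V) atTop (𝓝 0) := by
    convert ((((tU'.pow 2).add (tV'.pow 2)).div_const 2).sub
      (((tU.pow 2).add (tV.pow 2)).div_const 2)).add
      ((((tU.pow 4).const_mul (α / 4)).add
        (((tU.pow 2).mul (tV.pow 2)).const_mul (β / 2))).add ((tV.pow 4).const_mul (γ / 4))) using 2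
    · simp only [systemEnergy]
      ring
    · norm_num
  exact tendsto_nhds_unique (tendsto_const_nhds.congr fun s => (hconst s).symm) hlim

theorem hasDerivAt_pohozaev (hU : ContDiff ℝ 2 U) (hV : ContDiff ℝ 2 V)
    (hUode : ∀ r, -(deriv (deriv U) r) + U r = α * U r ^ 3 + β * U r * V r ^ 2)
    (hVode : ∀ r, -(deriv (deriv V) r) + V r = γ * V r ^ 3 + β * U r ^ 2 * V r)
    (hE : ∀ r, systemEnergy α β γ U V r = 0) (r : ℝ) :
    HasDerivAt (fun r => deriv U r * U r + deriv V r * V r)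
      (3 * (deriv U r ^ 2 + deriv V r ^ 2) - (U r ^ 2 + V r ^ 2)) r := by
  have hU₁ := (hU.differentiable two_ne_zero r).hasDerivAt
  have hV₁ := (hV.differentiable two_ne_zero r).hasDerivAt
  have hU₂ := ((hU.deriv' (n := 1)).differentiable one_ne_zero r).hasDerivAt
  have hV₂ := ((hV.deriv' (n := 1)).differentiable one_ne_zero r).hasDerivAt
  refine ((hU₂.mul hU₁).add (hV₂.mul hV₁)).congr_deriv ?_
  unfold systemEnergy at hE
  linear_combination -U r * hUode r - V r * hVode r - 4 * hE r

theorem pohozaev_identity (hU : ContDiff ℝ 2 U) (hV : ContDiff ℝ 2 V)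
    (hUode : ∀ r, -(deriv (deriv U) r) + U r = α * U r ^ 3 + β * U r * V r ^ 2)
    (hVode : ∀ r, -(deriv (deriv V) r) + V r = γ * V r ^ 3 + β * U r ^ 2 * V r)
    (hU0 : deriv U 0 = 0) (hV0 : deriv V 0 = 0)
    (tU : Tendsto U atTop (𝓝 0)) (tV : Tendsto V atTop (𝓝 0))
    (tU' : Tendsto (deriv U) atTop (𝓝 0)) (tV' : Tendsto (deriv V) atTop (𝓝 0))
    (hint : IntegrableOn (fun r => U r ^ 2 + V r ^ 2) (Ioi 0))
    (hint' : IntegrableOn (fun r => deriv U r ^ 2 + deriv V r ^ 2) (Ioi 0)) :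
    ∫ r in Ioi 0, (U r ^ 2 + V r ^ 2) = 3 * ∫ r in Ioi 0, (deriv U r ^ 2 + deriv V r ^ 2) := by
  have hF := hasDerivAt_pohozaev hU hV hUode hVode
    (systemEnergy_eq_zero hU hV hUode hVode tU tV tU' tV')
  have hcont : Continuous fun r => deriv U r * U r + deriv V r * V r :=
    ((hU.continuous_deriv one_le_two).mul hU.continuous).add
      ((hV.continuous_deriv one_le_two).mul hV.continuous)
  have hzero := integral_Ioi_of_hasDerivAt_of_tendsto hcont.continuousWithinAt
    (fun r _ => hF r) ((hint'.const_mul 3).sub hint) ((tU'.mul tU).add (tV'.mul tV))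
  rw [integral_sub (hint'.const_mul 3) hint, integral_const_mul] at hzero
  simp only [hU0, hV0] at hzero
  linarith

end CoupledSystem

theorem pohozaev_system_2 (α β γ : ℝ) (U V : ℝ → ℝ)
    (hU : ContDiff ℝ 2 U) (hV : ContDiff ℝ 2 V)
    (hUeven : ∀ r : ℝ, U (-r) = U r) (hVeven : ∀ r : ℝ, V (-r) = V r)
    (hUode : ∀ r : ℝ, -(deriv (deriv U) r) + U r
      = α * (U r) ^ 3 + β * U r * (V r) ^ 2)
    (hVode : ∀ r : ℝ, -(deriv (deriv V) r) + V r
      = γ * (V r) ^ 3 + β * (U r) ^ 2 * V r)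
    (hdecay : ∃ C > (0:ℝ), ∃ η > (0:ℝ), ∀ r : ℝ,
      |U r| + |deriv U r| + |V r| + |deriv V r| ≤ C * Real.exp (-η * |r|)) :
    (∫ r in Set.Ioi (0:ℝ), ((U r) ^ 2 + (V r) ^ 2))
      = 3 * ∫ r in Set.Ioi (0:ℝ), (|deriv U r| ^ 2 + |deriv V r| ^ 2) := by
  obtain ⟨C, -, η, hη, hdecay⟩ := hdecay
  have hbU : ∀ r, |U r| ≤ C * exp (-η * |r|) := fun r => by
    linarith [hdecay r, abs_nonneg (deriv U r), abs_nonneg (V r), abs_nonneg (deriv V r)]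
  have hbU' : ∀ r, |deriv U r| ≤ C * exp (-η * |r|) := fun r => by
    linarith [hdecay r, abs_nonneg (U r), abs_nonneg (V r), abs_nonneg (deriv V r)]
  have hbV : ∀ r, |V r| ≤ C * exp (-η * |r|) := fun r => by
    linarith [hdecay r, abs_nonneg (U r), abs_nonneg (deriv U r), abs_nonneg (deriv V r)]
  have hbV' : ∀ r, |deriv V r| ≤ C * exp (-η * |r|) := fun r => by
    linarith [hdecay r, abs_nonneg (U r), abs_nonneg (deriv U r), abs_nonneg (V r)]
  have cU' := hU.continuous_deriv one_le_two
  have cV' := hV.continuous_deriv one_le_two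
  simp only [sq_abs]
  exact pohozaev_identity hU hV hUode hVode
    ((Function.Even.deriv hUeven).map_zero) ((Function.Even.deriv hVeven).map_zero)
    (tendsto_atTop_zero_of_abs_le_exp hη hbU) (tendsto_atTop_zero_of_abs_le_exp hη hbV)
    (tendsto_atTop_zero_of_abs_le_exp hη hbU') (tendsto_atTop_zero_of_abs_le_exp hη hbV')
    ((integrableOn_Ioi_sq_of_abs_le_exp hU.continuous hη hbU).add
      (integrableOn_Ioi_sq_of_abs_le_exp hV.continuous hη hbV))
    ((integrableOn_Ioi_sq_of_abs_le_exp cU' hη hbU').add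
      (integrableOn_Ioi_sq_of_abs_le_exp cV' hη hbV'))
end

section
/- Let α, β, γ ∈ ℝ and let U, V : ℝ → ℝ be twice continuously differentiable even functions satisfying -U''(r) + U(r) = α·U(r)³ + β·U(r)·V(r)² and -V''(r) + V(r) = γ·V(r)³ + β·U(r)²·V(r) for all r ∈ ℝ, and suppose there exist constants C, η > 0 such that |U(r)| + |U'(r)| + |V(r)| + |V'(r)| ≤ C·e^{-η|r|} for all r ∈ ℝ. Then -∫₀^∞ (|U'(r)|² + |V'(r)|²) dr + ∫₀^∞ (U(r)² + V(r)²) dr = (1/2)·∫₀^∞ (α·U(r)⁴ + γ·V(r)⁴) dr + β·∫₀^∞ U(r)²·V(r)² dr. -/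
/-!
The system has the first integral
`H = (U² + V² - U'² - V'²)/2 - (α U⁴ + γ V⁴)/4 - β U² V²/2`:
differentiating and substituting the equations gives `H' = 0`. Since `U, U', V, V'` vanish at
infinity, `H ≡ 0`, which is the claimed identity pointwise; integrating it over `(0, ∞)` is legitimate
because every term decays exponentially.
-/

open MeasureTheory Filter Topology Asymptotics Real

def ExpDecaysAtTop (f : ℝ → ℝ) : Prop :=
  ∃ b > 0, f =O[atTop] fun x => exp (-b * x)

lemma isBigO_exp_neg_mul_of_le {b b' : ℝ} (h : b' ≤ b) :
    (fun x => exp (-b * x)) =O[atTop] fun x => exp (-b' * x) := by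
  refine IsBigO.of_bound 1 ?_
  filter_upwards [eventually_ge_atTop 0] with x hx
  rw [norm_of_nonneg (exp_pos _).le, norm_of_nonneg (exp_pos _).le, one_mul, exp_le_exp]
  nlinarith

namespace ExpDecaysAtTop

variable {f g : ℝ → ℝ}

lemma of_abs_le {C η : ℝ} (hη : 0 < η) (h : ∀ x, |f x| ≤ C * exp (-η * |x|)) :
    ExpDecaysAtTop f := by
  refine ⟨η, hη, IsBigO.of_bound C ?_⟩
  filter_upwards [eventually_ge_atTop 0] with x hx
  rw [norm_eq_abs, norm_of_nonneg (exp_pos _).le]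
  simpa only [abs_of_nonneg hx] using h x

lemma add (hf : ExpDecaysAtTop f) (hg : ExpDecaysAtTop g) :
    ExpDecaysAtTop fun x => f x + g x := by
  obtain ⟨b, hb, hfb⟩ := hf
  obtain ⟨b', hb', hgb'⟩ := hg
  exact ⟨min b b', lt_min hb hb',
    (hfb.trans (isBigO_exp_neg_mul_of_le (min_le_left b b'))).add
      (hgb'.trans (isBigO_exp_neg_mul_of_le (min_le_right b b')))⟩

lemma mul (hf : ExpDecaysAtTop f) (hg : ExpDecaysAtTop g) :
    ExpDecaysAtTop fun x => f x * g x := by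
  obtain ⟨b, hb, hfb⟩ := hf
  obtain ⟨b', hb', hgb'⟩ := hg
  refine ⟨b + b', add_pos hb hb', (hfb.mul hgb').congr_right fun x => ?_⟩
  rw [← exp_add]
  ring_nf

lemma pow (hf : ExpDecaysAtTop f) {n : ℕ} (hn : n ≠ 0) : ExpDecaysAtTop fun x => f x ^ n := by
  obtain ⟨b, hb, hfb⟩ := hf
  refine ⟨n * b, by positivity, (hfb.pow n).congr_right fun x => ?_⟩
  rw [← exp_nat_mul]
  ring_nf

lemma const_mul (hf : ExpDecaysAtTop f) (c : ℝ) : ExpDecaysAtTop fun x => c * f x := by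
  obtain ⟨b, hb, hfb⟩ := hf
  exact ⟨b, hb, hfb.const_mul_left c⟩

lemma tendsto_zero (hf : ExpDecaysAtTop f) : Tendsto f atTop (𝓝 0) := by
  obtain ⟨b, hb, hfb⟩ := hf
  refine hfb.trans_tendsto ?_
  simpa only [neg_mul, Function.comp_def, id] using
    tendsto_exp_neg_atTop_nhds_zero.comp (tendsto_id.const_mul_atTop hb)

lemma integrableOn_Ioi (hf : ExpDecaysAtTop f) (hc : Continuous f) (a : ℝ) :
    IntegrableOn f (Set.Ioi a) := by
  obtain ⟨b, hb, hfb⟩ := hf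
  exact integrable_of_isBigO_exp_neg hb hc.continuousOn hfb

end ExpDecaysAtTop

noncomputable def systemHamiltonian (α β γ : ℝ) (U V : ℝ → ℝ) (r : ℝ) : ℝ :=
  ((U r) ^ 2 + (V r) ^ 2 - (deriv U r) ^ 2 - (deriv V r) ^ 2) / 2
    - (α * (U r) ^ 4 + γ * (V r) ^ 4) / 4 - β * (U r) ^ 2 * (V r) ^ 2 / 2

section Hamiltonian

variable {α β γ : ℝ} {U V : ℝ → ℝ}

lemma hasDerivAt_systemHamiltonian (hU : ContDiff ℝ 2 U) (hV : ContDiff ℝ 2 V) {r : ℝ}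
    (hUode : -(deriv (deriv U) r) + U r = α * (U r) ^ 3 + β * U r * (V r) ^ 2)
    (hVode : -(deriv (deriv V) r) + V r = γ * (V r) ^ 3 + β * (U r) ^ 2 * V r) :
    HasDerivAt (systemHamiltonian α β γ U V) 0 r := by
  have hu := (hU.differentiable two_ne_zero r).hasDerivAt
  have hv := (hV.differentiable two_ne_zero r).hasDerivAt
  have hu' := (hU.differentiable_deriv_two r).hasDerivAt
  have hv' := (hV.differentiable_deriv_two r).hasDerivAt
  have H := (((((hu.fun_pow 2).add (hv.fun_pow 2)).sub (hu'.fun_pow 2)).sub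
    (hv'.fun_pow 2)).div_const 2).sub
    ((((hu.fun_pow 4).const_mul α).add ((hv.fun_pow 4).const_mul γ)).div_const 4) |>.sub
    ((((hu.fun_pow 2).const_mul β).mul (hv.fun_pow 2)).div_const 2)
  refine H.congr_deriv ?_
  push_cast
  linear_combination deriv U r * hUode + deriv V r * hVode

lemma systemHamiltonian_eq_zero (hU : ContDiff ℝ 2 U) (hV : ContDiff ℝ 2 V)
    (hUode : ∀ r, -(deriv (deriv U) r) + U r = α * (U r) ^ 3 + β * U r * (V r) ^ 2)
    (hVode : ∀ r, -(deriv (deriv V) r) + V r = γ * (V r) ^ 3 + β * (U r) ^ 2 * V r)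
    (hUlim : Tendsto U atTop (𝓝 0)) (hU'lim : Tendsto (deriv U) atTop (𝓝 0))
    (hVlim : Tendsto V atTop (𝓝 0)) (hV'lim : Tendsto (deriv V) atTop (𝓝 0)) (r : ℝ) :
    systemHamiltonian α β γ U V r = 0 := by
  have hderiv r := hasDerivAt_systemHamiltonian hU hV (hUode r) (hVode r)
  have hconst : ∀ s, systemHamiltonian α β γ U V s = systemHamiltonian α β γ U V r :=
    fun s => is_const_of_deriv_eq_zero (fun x => (hderiv x).differentiableAt)
      (fun x => (hderiv x).deriv) s r
  have hlim : Tendsto (systemHamiltonian α β γ U V) atTop (𝓝 0) := by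
    have H := (((((hUlim.pow 2).add (hVlim.pow 2)).sub (hU'lim.pow 2)).sub
      (hV'lim.pow 2)).div_const 2).sub
      ((((hUlim.pow 4).const_mul α).add ((hVlim.pow 4).const_mul γ)).div_const 4) |>.sub
      ((((hUlim.pow 2).const_mul β).mul (hVlim.pow 2)).div_const 2)
    norm_num at H
    exact H
  exact tendsto_nhds_unique (tendsto_const_nhds.congr fun s => (hconst s).symm) hlim

end Hamiltonian

theorem system_pohozaev_half_general (α β γ : ℝ) (U V : ℝ → ℝ)
    (hU : ContDiff ℝ 2 U) (hV : ContDiff ℝ 2 V)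
    (hUode : ∀ r : ℝ, -(deriv (deriv U) r) + U r
      = α * (U r) ^ 3 + β * U r * (V r) ^ 2)
    (hVode : ∀ r : ℝ, -(deriv (deriv V) r) + V r
      = γ * (V r) ^ 3 + β * (U r) ^ 2 * V r)
    (hdecay : ∃ C > (0:ℝ), ∃ η > (0:ℝ), ∀ r : ℝ,
      |U r| + |deriv U r| + |V r| + |deriv V r| ≤ C * Real.exp (-η * |r|)) :
    -(∫ r in Set.Ioi (0:ℝ), (|deriv U r| ^ 2 + |deriv V r| ^ 2))
        + (∫ r in Set.Ioi (0:ℝ), ((U r) ^ 2 + (V r) ^ 2))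
      = (1 / 2) * (∫ r in Set.Ioi (0:ℝ), (α * (U r) ^ 4 + γ * (V r) ^ 4))
        + β * ∫ r in Set.Ioi (0:ℝ), (U r) ^ 2 * (V r) ^ 2 := by
  obtain ⟨C, -, η, hη, hdec⟩ := hdecay
  have hbound r : |U r| ≤ C * exp (-η * |r|) ∧ |deriv U r| ≤ C * exp (-η * |r|) ∧
      |V r| ≤ C * exp (-η * |r|) ∧ |deriv V r| ≤ C * exp (-η * |r|) := by
    have := hdec r
    refine ⟨?_, ?_, ?_, ?_⟩ <;>
      linarith [abs_nonneg (U r), abs_nonneg (deriv U r), abs_nonneg (V r), abs_nonneg (deriv V r)]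
  have hUd : ExpDecaysAtTop U := .of_abs_le hη fun r => (hbound r).1
  have hU'd : ExpDecaysAtTop (deriv U) := .of_abs_le hη fun r => (hbound r).2.1
  have hVd : ExpDecaysAtTop V := .of_abs_le hη fun r => (hbound r).2.2.1
  have hV'd : ExpDecaysAtTop (deriv V) := .of_abs_le hη fun r => (hbound r).2.2.2
  have hpointwise r : ((U r) ^ 2 + (V r) ^ 2) - ((deriv U r) ^ 2 + (deriv V r) ^ 2)
      = (1 / 2) * (α * (U r) ^ 4 + γ * (V r) ^ 4) + β * ((U r) ^ 2 * (V r) ^ 2) := by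
    have H := systemHamiltonian_eq_zero hU hV hUode hVode hUd.tendsto_zero hU'd.tendsto_zero
      hVd.tendsto_zero hV'd.tendsto_zero r
    rw [systemHamiltonian] at H
    linear_combination 2 * H
  have hUc := hU.continuous; have hVc := hV.continuous
  have hU'c := hU.continuous_deriv one_le_two; have hV'c := hV.continuous_deriv one_le_two
  have hgrad := ((hU'd.pow two_ne_zero).add (hV'd.pow two_ne_zero)).integrableOn_Ioi
    (by fun_prop) 0
  have hmass := ((hUd.pow two_ne_zero).add (hVd.pow two_ne_zero)).integrableOn_Ioi (by fun_prop) 0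
  have hquartic := (((hUd.pow four_ne_zero).const_mul α).add
    ((hVd.pow four_ne_zero).const_mul γ)).integrableOn_Ioi (by fun_prop) 0
  have hcoupling := ((hUd.pow two_ne_zero).mul (hVd.pow two_ne_zero)).integrableOn_Ioi
    (by fun_prop) 0
  simp only [sq_abs]
  rw [neg_add_eq_sub, ← integral_sub hmass hgrad, ← integral_const_mul, ← integral_const_mul,
    ← integral_add (hquartic.const_mul _) (hcoupling.const_mul _)]
  exact integral_congr_ae (Eventually.of_forall hpointwise)

theorem system_pohozaev_half (α β γ : ℝ) (U V : ℝ → ℝ)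
    (hU : ContDiff ℝ 2 U) (hV : ContDiff ℝ 2 V)
    (hUeven : ∀ r : ℝ, U (-r) = U r) (hVeven : ∀ r : ℝ, V (-r) = V r)
    (hUode : ∀ r : ℝ, -(deriv (deriv U) r) + U r
      = α * (U r) ^ 3 + β * U r * (V r) ^ 2)
    (hVode : ∀ r : ℝ, -(deriv (deriv V) r) + V r
      = γ * (V r) ^ 3 + β * (U r) ^ 2 * V r)
    (hdecay : ∃ C > (0:ℝ), ∃ η > (0:ℝ), ∀ r : ℝ,
      |U r| + |deriv U r| + |V r| + |deriv V r| ≤ C * Real.exp (-η * |r|)) :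
    -(∫ r in Set.Ioi (0:ℝ), (|deriv U r| ^ 2 + |deriv V r| ^ 2))
        + (∫ r in Set.Ioi (0:ℝ), ((U r) ^ 2 + (V r) ^ 2))
      = (1 / 2) * (∫ r in Set.Ioi (0:ℝ), (α * (U r) ^ 4 + γ * (V r) ^ 4))
        + β * ∫ r in Set.Ioi (0:ℝ), (U r) ^ 2 * (V r) ^ 2 :=
  system_pohozaev_half_general α β γ U V hU hV hUode hVode hdecay
end

section
/- Let λ, α, β, γ ∈ ℝ, let P, Q : [0,∞) → ℝ be continuously differentiable with P, Q, P', Q' bounded, and let u, v : [0,∞) → ℝ be twice continuously differentiable functions with u'(0) = v'(0) = 0, satisfying -u''(r) - u'(r)/r + (λ + P(r))·u(r) = α·u(r)³ + β·u(r)·v(r)² and -v''(r) - v'(r)/r + (λ + Q(r))·v(r) = γ·v(r)³ + β·u(r)²·v(r) for all r > 0, and suppose there exist constants C, η > 0 such that |u(r)| + |u'(r)| + |v(r)| + |v'(r)| ≤ C·e^{-ηr} for all r ≥ 0. Then 2·∫₀^∞ r·((λ + P(r))·u(r)² + (λ + Q(r))·v(r)²) dr = ∫₀^∞ r·(α·u(r)⁴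 + γ·v(r)⁴) dr + 2β·∫₀^∞ r·u(r)²·v(r)² dr - ∫₀^∞ r²·(P'(r)·u(r)² + Q'(r)·v(r)²) dr. -/
/-!
Multiply the equations by `r² u'` and `r² v'`: this amounts to differentiating
`W r = r² ((λ+P)u² + (λ+Q)v² - u'² - v'² - α/2 u⁴ - γ/2 v⁴ - β u²v²)`.
Along solutions the terms containing `u'`, `v'` cancel (those produced by `(r²)' = 2r` against the
friction term `u'/r`, the others by the chain rule), so `W'` is exactly the integrand of the
identity. `W 0 = 0` because of the factor `r²` and `W → 0` at infinity by the exponential decay,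
hence `∫₀^∞ W' = 0`.
-/

open MeasureTheory Filter Topology Asymptotics Set

namespace Asymptotics

variable {α : Type*} {l : Filter α} {c f g : α → ℝ}

theorem isBigO_mul_of_isBigO_one_left (hc : c =O[l] fun _ => (1 : ℝ)) (hf : f =O[l] g) :
    (fun x => c x * f x) =O[l] g := by
  simpa only [one_mul] using hc.mul hf

theorem IsBigO.pow_of_isBigO_one (hf : f =O[l] g) (hg : g =O[l] fun _ => (1 : ℝ))
    {n : ℕ} (hn : n ≠ 0) : (fun x => f x ^ n) =O[l] g := by
  obtain ⟨m, rfl⟩ := Nat.exists_eq_succ_of_ne_zero hn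
  simpa only [pow_succ', one_pow, mul_one] using hf.mul ((hf.trans hg).pow m)

theorem isBigO_one_of_abs_le {f : ℝ → ℝ} {s : Set ℝ} {C : ℝ}
    (h : ∀ r ∈ s, |f r| ≤ C) : f =O[𝓟 s] fun _ => (1 : ℝ) :=
  isBigO_principal.2 ⟨C, fun r hr => by simpa using h r hr⟩

end Asymptotics

theorem exp_neg_mul_isBigO_one {η : ℝ} (hη : 0 ≤ η) :
    (fun r => Real.exp (-η * r)) =O[𝓟 (Ici 0)] fun _ => (1 : ℝ) :=
  isBigO_one_of_abs_le fun r (hr : 0 ≤ r) => by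
    rw [abs_of_pos (Real.exp_pos _), Real.exp_le_one_iff]
    nlinarith

theorem integrableOn_Ioi_pow_mul_of_isBigO_exp {f : ℝ → ℝ} {η : ℝ} (hη : 0 < η) (k : ℕ)
    (hf : ContinuousOn f (Ioi 0)) (hfO : f =O[𝓟 (Ici 0)] fun r => Real.exp (-η * r)) :
    IntegrableOn (fun r => r ^ k * f r) (Ioi 0) := by
  obtain ⟨C, hC⟩ := isBigO_principal.1 hfO
  have hg : IntegrableOn (fun r : ℝ => r ^ (k : ℝ) * Real.exp (-η * r ^ (1 : ℝ))) (Ioi 0) :=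
    integrableOn_rpow_mul_exp_neg_mul_rpow (neg_one_lt_zero.trans_le k.cast_nonneg) one_pos hη
  refine Integrable.mono' (hg.const_mul C)
    (((continuousOn_pow k).mul hf).aestronglyMeasurable measurableSet_Ioi) ?_
  filter_upwards [ae_restrict_mem measurableSet_Ioi] with r (hr : 0 < r)
  rw [norm_mul, norm_pow, Real.norm_of_nonneg hr.le, Real.rpow_natCast, Real.rpow_one]
  calc r ^ k * ‖f r‖ ≤ r ^ k * (C * ‖Real.exp (-η * r)‖) := by gcongr; exact hC r hr.le
    _ = C * (r ^ k * Real.exp (-η * r)) := by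
      rw [Real.norm_of_nonneg (Real.exp_pos _).le]; ring

theorem tendsto_pow_mul_atTop_of_isBigO_exp {f : ℝ → ℝ} {η : ℝ} (hη : 0 < η) (k : ℕ)
    (hf : f =O[atTop] fun r => Real.exp (-η * r)) :
    Tendsto (fun r => r ^ k * f r) atTop (𝓝 0) := by
  refine ((isBigO_refl (fun r : ℝ => r ^ k) atTop).mul hf).trans_tendsto ?_
  simpa only [Real.rpow_natCast] using tendsto_rpow_mul_exp_neg_mul_atTop_nhds_zero k η hη

theorem integral_Ioi_eq_zero_of_hasDerivAt_sq_mul {L w : ℝ → ℝ} {η : ℝ} (hη : 0 < η)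
    (hL : L =O[𝓟 (Ici 0)] fun r => Real.exp (-η * r))
    (hderiv : ∀ r ∈ Ioi (0 : ℝ), HasDerivAt (fun x => x ^ 2 * L x) (w r) r)
    (hw : IntegrableOn w (Ioi 0)) : ∫ r in Ioi 0, w r = 0 := by
  have hcont : ContinuousWithinAt (fun x => x ^ 2 * L x) (Ici 0) 0 := by
    have hbound : Tendsto (fun x : ℝ => x ^ 2 * Real.exp (-η * x)) (𝓝[Ici 0] 0) (𝓝 0) := by
      have : Continuous fun x : ℝ => x ^ 2 * Real.exp (-η * x) := by fun_prop
      simpa using (this.tendsto 0).mono_left nhdsWithin_le_nhds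
    rw [ContinuousWithinAt, zero_pow two_ne_zero, zero_mul]
    have hL0 : L =O[𝓝[Ici 0] 0] fun r => Real.exp (-η * r) := hL.mono inf_le_right
    exact ((isBigO_refl (fun x : ℝ => x ^ 2) _).mul hL0).trans_tendsto hbound
  simpa using integral_Ioi_of_hasDerivAt_of_tendsto hcont hderiv hw
    (tendsto_pow_mul_atTop_of_isBigO_exp hη 2 (hL.mono (le_principal_iff.2 (Ici_mem_atTop 0))))

section RadialSystem

variable {lam α β γ : ℝ} {P Q u v : ℝ → ℝ}

/-- With `r` as time the equations are Newton's equations with friction `-u'/r`; this is `-2` times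
their mechanical energy. -/
noncomputable def pohozaevDensity (lam α β γ : ℝ) (P Q u v : ℝ → ℝ) (r : ℝ) : ℝ :=
  (lam + P r) * u r ^ 2 + (lam + Q r) * v r ^ 2 - deriv u r ^ 2 - deriv v r ^ 2
    - α / 2 * u r ^ 4 - γ / 2 * v r ^ 4 - β * u r ^ 2 * v r ^ 2

theorem isBigO_pohozaevDensity {l : Filter ℝ} {g : ℝ → ℝ} (hg : g =O[l] fun _ => (1 : ℝ))
    (hP : P =O[l] fun _ => (1 : ℝ)) (hQ : Q =O[l] fun _ => (1 : ℝ))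
    (hu : u =O[l] g) (hu' : deriv u =O[l] g) (hv : v =O[l] g) (hv' : deriv v =O[l] g) :
    pohozaevDensity lam α β γ P Q u v =O[l] g := by
  have hsq {f : ℝ → ℝ} (hf : f =O[l] g) : (fun r => f r ^ 2) =O[l] g :=
    hf.pow_of_isBigO_one hg two_ne_zero
  have hquart {f : ℝ → ℝ} (hf : f =O[l] g) : (fun r => f r ^ 4) =O[l] g :=
    hf.pow_of_isBigO_one hg four_ne_zero
  have hcoef {f : ℝ → ℝ} (hf : f =O[l] fun _ => (1 : ℝ)) :
      (fun r => lam + f r) =O[l] fun _ => (1 : ℝ) :=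
    (isBigO_const_one ℝ lam l).add hf
  exact ((((((isBigO_mul_of_isBigO_one_left (hcoef hP) (hsq hu)).add
    (isBigO_mul_of_isBigO_one_left (hcoef hQ) (hsq hv))).sub (hsq hu')).sub (hsq hv')).sub
    ((hquart hu).const_mul_left _)).sub ((hquart hv).const_mul_left _)).sub
    (isBigO_mul_of_isBigO_one_left (((hsq hu).trans hg).const_mul_left β) (hsq hv))

theorem hasDerivAt_sq_mul_pohozaevDensity {r : ℝ} (hr : r ≠ 0)
    (hP : DifferentiableAt ℝ P r) (hQ : DifferentiableAt ℝ Q r)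
    (hu : DifferentiableAt ℝ u r) (hv : DifferentiableAt ℝ v r)
    (hu' : DifferentiableAt ℝ (deriv u) r) (hv' : DifferentiableAt ℝ (deriv v) r)
    (hueq : -(deriv (deriv u) r) - deriv u r / r + (lam + P r) * u r
      = α * u r ^ 3 + β * u r * v r ^ 2)
    (hveq : -(deriv (deriv v) r) - deriv v r / r + (lam + Q r) * v r
      = γ * v r ^ 3 + β * u r ^ 2 * v r) :
    HasDerivAt (fun x => x ^ 2 * pohozaevDensity lam α β γ P Q u v x)
      (2 * (r * ((lam + P r) * u r ^ 2 + (lam + Q r) * v r ^ 2))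
        - r * (α * u r ^ 4 + γ * v r ^ 4) - 2 * β * (r * u r ^ 2 * v r ^ 2)
        + r ^ 2 * (deriv P r * u r ^ 2 + deriv Q r * v r ^ 2)) r := by
  have hu'' : deriv (deriv u) r
      = (lam + P r) * u r - α * u r ^ 3 - β * u r * v r ^ 2 - deriv u r / r := by
    linarith
  have hv'' : deriv (deriv v) r
      = (lam + Q r) * v r - γ * v r ^ 3 - β * u r ^ 2 * v r - deriv v r / r := by
    linarith
  have hP := hP.hasDerivAt; have hQ := hQ.hasDerivAt; have hu := hu.hasDerivAt
  have hv := hv.hasDerivAt; have hu' := hu'.hasDerivAt; have hv' := hv'.hasDerivAt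
  refine ((hasDerivAt_pow 2 r).mul ((((((((hP.const_add lam).mul (hu.pow 2)).add
    ((hQ.const_add lam).mul (hv.pow 2))).sub (hu'.pow 2)).sub (hv'.pow 2)).sub
    ((hu.pow 4).const_mul (α / 2))).sub ((hv.pow 4).const_mul (γ / 2))).sub
    (((hu.pow 2).const_mul β).mul (hv.pow 2)))).congr_deriv ?_
  simp only [Pi.add_apply, Pi.sub_apply, Pi.mul_apply, Pi.pow_apply, hu'', hv'']
  field_simp
  ring

theorem radial_pohozaev_of_isBigO {η : ℝ} (hη : 0 < η)
    (hP : ContDiffOn ℝ 1 P (Ioi 0)) (hQ : ContDiffOn ℝ 1 Q (Ioi 0))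
    (hu : ContDiffOn ℝ 2 u (Ioi 0)) (hv : ContDiffOn ℝ 2 v (Ioi 0))
    (hueq : ∀ r > 0, -(deriv (deriv u) r) - deriv u r / r + (lam + P r) * u r
      = α * u r ^ 3 + β * u r * v r ^ 2)
    (hveq : ∀ r > 0, -(deriv (deriv v) r) - deriv v r / r + (lam + Q r) * v r
      = γ * v r ^ 3 + β * u r ^ 2 * v r)
    (hPO : P =O[𝓟 (Ici 0)] fun _ => (1 : ℝ))
    (hP'O : deriv P =O[𝓟 (Ici 0)] fun _ => (1 : ℝ))
    (hQO : Q =O[𝓟 (Ici 0)] fun _ => (1 : ℝ))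
    (hQ'O : deriv Q =O[𝓟 (Ici 0)] fun _ => (1 : ℝ))
    (huO : u =O[𝓟 (Ici 0)] fun r => Real.exp (-η * r))
    (hu'O : deriv u =O[𝓟 (Ici 0)] fun r => Real.exp (-η * r))
    (hvO : v =O[𝓟 (Ici 0)] fun r => Real.exp (-η * r))
    (hv'O : deriv v =O[𝓟 (Ici 0)] fun r => Real.exp (-η * r)) :
    2 * (∫ r in Ioi 0, r * ((lam + P r) * u r ^ 2 + (lam + Q r) * v r ^ 2))
      = (∫ r in Ioi 0, r * (α * u r ^ 4 + γ * v r ^ 4))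
        + 2 * β * (∫ r in Ioi 0, r * u r ^ 2 * v r ^ 2)
        - ∫ r in Ioi 0, r ^ 2 * (deriv P r * u r ^ 2 + deriv Q r * v r ^ 2) := by
  have hg := exp_neg_mul_isBigO_one hη.le
  have hsq {f : ℝ → ℝ} (hf : f =O[𝓟 (Ici 0)] fun r => Real.exp (-η * r)) :=
    hf.pow_of_isBigO_one hg two_ne_zero
  have hu' : ContDiffOn ℝ 1 (deriv u) (Ioi 0) := hu.deriv_of_isOpen isOpen_Ioi le_rfl
  have hv' : ContDiffOn ℝ 1 (deriv v) (Ioi 0) := hv.deriv_of_isOpen isOpen_Ioi le_rfl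
  have hPc := hP.continuousOn
  have hQc := hQ.continuousOn
  have huc := hu.continuousOn
  have hvc := hv.continuousOn
  have hP'c := hP.continuousOn_deriv_of_isOpen isOpen_Ioi le_rfl
  have hQ'c := hQ.continuousOn_deriv_of_isOpen isOpen_Ioi le_rfl
  have h₁ : IntegrableOn (fun r => r * ((lam + P r) * u r ^ 2 + (lam + Q r) * v r ^ 2))
      (Ioi 0) := by
    simpa only [pow_one] using integrableOn_Ioi_pow_mul_of_isBigO_exp hη 1 (by fun_prop)
      ((isBigO_mul_of_isBigO_one_left ((isBigO_const_one ℝ lam _).add hPO) (hsq huO)).add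
        (isBigO_mul_of_isBigO_one_left ((isBigO_const_one ℝ lam _).add hQO) (hsq hvO)))
  have h₂ : IntegrableOn (fun r => r * (α * u r ^ 4 + γ * v r ^ 4)) (Ioi 0) := by
    simpa only [pow_one] using integrableOn_Ioi_pow_mul_of_isBigO_exp hη 1 (by fun_prop)
      (((huO.pow_of_isBigO_one hg four_ne_zero).const_mul_left α).add
        ((hvO.pow_of_isBigO_one hg four_ne_zero).const_mul_left γ))
  have h₃ : IntegrableOn (fun r => r * u r ^ 2 * v r ^ 2) (Ioi 0) := by
    simpa only [pow_one, mul_assoc] using integrableOn_Ioi_pow_mul_of_isBigO_exp hη 1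
      (by fun_prop) (isBigO_mul_of_isBigO_one_left ((hsq huO).trans hg) (hsq hvO))
  have h₄ : IntegrableOn (fun r => r ^ 2 * (deriv P r * u r ^ 2 + deriv Q r * v r ^ 2))
      (Ioi 0) :=
    integrableOn_Ioi_pow_mul_of_isBigO_exp hη 2 (by fun_prop)
      ((isBigO_mul_of_isBigO_one_left hP'O (hsq huO)).add
        (isBigO_mul_of_isBigO_one_left hQ'O (hsq hvO)))
  have key := integral_Ioi_eq_zero_of_hasDerivAt_sq_mul hη
    (isBigO_pohozaevDensity hg hPO hQO huO hu'O hvO hv'O)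
    (fun r (hr : 0 < r) => hasDerivAt_sq_mul_pohozaevDensity hr.ne'
      ((hP.differentiableOn one_ne_zero).differentiableAt (Ioi_mem_nhds hr))
      ((hQ.differentiableOn one_ne_zero).differentiableAt (Ioi_mem_nhds hr))
      ((hu.differentiableOn two_ne_zero).differentiableAt (Ioi_mem_nhds hr))
      ((hv.differentiableOn two_ne_zero).differentiableAt (Ioi_mem_nhds hr))
      ((hu'.differentiableOn one_ne_zero).differentiableAt (Ioi_mem_nhds hr))
      ((hv'.differentiableOn one_ne_zero).differentiableAt (Ioi_mem_nhds hr))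
      (hueq r hr) (hveq r hr))
    ((((h₁.const_mul 2).sub h₂).sub (h₃.const_mul (2 * β))).add h₄)
  rw [integral_add, integral_sub, integral_sub, integral_const_mul, integral_const_mul] at key
  exacts [by linarith, h₁.const_mul 2, h₂, (h₁.const_mul 2).sub h₂, h₃.const_mul _,
    ((h₁.const_mul 2).sub h₂).sub (h₃.const_mul _), h₄]

end RadialSystem

theorem radial_pohozaev_sum_general (lam α β γ : ℝ) (P Q u v : ℝ → ℝ)
    (hP : ContDiffOn ℝ 1 P (Set.Ici 0)) (hQ : ContDiffOn ℝ 1 Q (Set.Ici 0))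
    (hPbdd : ∃ C : ℝ, ∀ r ≥ (0:ℝ), |P r| ≤ C ∧ |deriv P r| ≤ C)
    (hQbdd : ∃ C : ℝ, ∀ r ≥ (0:ℝ), |Q r| ≤ C ∧ |deriv Q r| ≤ C)
    (hu : ContDiffOn ℝ 2 u (Set.Ici 0)) (hv : ContDiffOn ℝ 2 v (Set.Ici 0))
    (hueq : ∀ r > (0:ℝ), -(deriv (deriv u) r) - deriv u r / r + (lam + P r) * u r
      = α * (u r) ^ 3 + β * u r * (v r) ^ 2)
    (hveq : ∀ r > (0:ℝ), -(deriv (deriv v) r) - deriv v r / r + (lam + Q r) * v r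
      = γ * (v r) ^ 3 + β * (u r) ^ 2 * v r)
    (hdecay : ∃ C > (0:ℝ), ∃ η > (0:ℝ), ∀ r ≥ (0:ℝ),
      |u r| + |deriv u r| + |v r| + |deriv v r| ≤ C * Real.exp (-η * r)) :
    2 * (∫ r in Set.Ioi (0:ℝ), r * ((lam + P r) * (u r) ^ 2 + (lam + Q r) * (v r) ^ 2))
      = (∫ r in Set.Ioi (0:ℝ), r * (α * (u r) ^ 4 + γ * (v r) ^ 4))
        + 2 * β * (∫ r in Set.Ioi (0:ℝ), r * (u r) ^ 2 * (v r) ^ 2)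
        - ∫ r in Set.Ioi (0:ℝ), r ^ 2 * (deriv P r * (u r) ^ 2 + deriv Q r * (v r) ^ 2) := by
  obtain ⟨CP, hCP⟩ := hPbdd
  obtain ⟨CQ, hCQ⟩ := hQbdd
  obtain ⟨C, -, η, hη, hdecay⟩ := hdecay
  have hexp {f : ℝ → ℝ} (hf : ∀ r, |f r| ≤ |u r| + |deriv u r| + |v r| + |deriv v r|) :
      f =O[𝓟 (Ici 0)] fun r => Real.exp (-η * r) :=
    isBigO_principal.2 ⟨C, fun r hr => by
      simpa [abs_of_pos (Real.exp_pos _)] using (hf r).trans (hdecay r hr)⟩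
  exact radial_pohozaev_of_isBigO hη (hP.mono Ioi_subset_Ici_self) (hQ.mono Ioi_subset_Ici_self)
    (hu.mono Ioi_subset_Ici_self) (hv.mono Ioi_subset_Ici_self) hueq hveq
    (isBigO_one_of_abs_le fun r hr => (hCP r hr).1)
    (isBigO_one_of_abs_le fun r hr => (hCP r hr).2)
    (isBigO_one_of_abs_le fun r hr => (hCQ r hr).1)
    (isBigO_one_of_abs_le fun r hr => (hCQ r hr).2)
    (hexp fun r => by grind [abs_nonneg]) (hexp fun r => by grind [abs_nonneg])
    (hexp fun r => by grind [abs_nonneg]) (hexp fun r => by grind [abs_nonneg])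

theorem radial_pohozaev_sum (lam α β γ : ℝ) (P Q u v : ℝ → ℝ)
    (hP : ContDiffOn ℝ 1 P (Set.Ici 0)) (hQ : ContDiffOn ℝ 1 Q (Set.Ici 0))
    (hPbdd : ∃ C : ℝ, ∀ r ≥ (0:ℝ), |P r| ≤ C ∧ |deriv P r| ≤ C)
    (hQbdd : ∃ C : ℝ, ∀ r ≥ (0:ℝ), |Q r| ≤ C ∧ |deriv Q r| ≤ C)
    (hu : ContDiffOn ℝ 2 u (Set.Ici 0)) (hv : ContDiffOn ℝ 2 v (Set.Ici 0))
    (hu0 : deriv u 0 = 0) (hv0 : deriv v 0 = 0)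
    (hueq : ∀ r > (0:ℝ), -(deriv (deriv u) r) - deriv u r / r + (lam + P r) * u r
      = α * (u r) ^ 3 + β * u r * (v r) ^ 2)
    (hveq : ∀ r > (0:ℝ), -(deriv (deriv v) r) - deriv v r / r + (lam + Q r) * v r
      = γ * (v r) ^ 3 + β * (u r) ^ 2 * v r)
    (hdecay : ∃ C > (0:ℝ), ∃ η > (0:ℝ), ∀ r ≥ (0:ℝ),
      |u r| + |deriv u r| + |v r| + |deriv v r| ≤ C * Real.exp (-η * r)) :
    2 * (∫ r in Set.Ioi (0:ℝ), r * ((lam + P r) * (u r) ^ 2 + (lam + Q r) * (v r) ^ 2))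
      = (∫ r in Set.Ioi (0:ℝ), r * (α * (u r) ^ 4 + γ * (v r) ^ 4))
        + 2 * β * (∫ r in Set.Ioi (0:ℝ), r * (u r) ^ 2 * (v r) ^ 2)
        - ∫ r in Set.Ioi (0:ℝ), r ^ 2 * (deriv P r * (u r) ^ 2 + deriv Q r * (v r) ^ 2) :=
  radial_pohozaev_sum_general lam α β γ P Q u v hP hQ hPbdd hQbdd hu hv hueq hveq hdecay
end

section
/- Let λ, α, β, γ ∈ ℝ, let P, Q : [0,∞) → ℝ be continuously differentiable with P, Q, P', Q' bounded, and let u, v : [0,∞) → ℝ be twice continuously differentiable functions with u'(0) = v'(0) = 0, satisfying -u''(r) - u'(r)/r + (λ + P(r))·u(r) = α·u(r)³ + β·u(r)·v(r)² and -v''(r) - v'(r)/r + (λ + Q(r))·v(r) = γ·v(r)³ + β·u(r)²·v(r) for all r > 0, and suppose there exist constants C, η > 0 such that |u(r)| + |u'(r)| + |v(r)| + |v'(r)| ≤ C·e^{-ηr} for all r ≥ 0. Then the Pohozaev identity 2·∫₀^∞ r·(|u'(r)|² + |v'(r)|²) dr - ∫₀^∞ r²·(P'(r)·u(r)² + Q'(r)·v(r)²)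 dr = ∫₀^∞ r·(α·u(r)⁴ + γ·v(r)⁴ + 2β·u(r)²·v(r)²) dr holds. -/
/-!
Multiply the equation for `u` by `r²u' + ru`, the one for `v` by `r²v' + rv`, and add. On the
left, `(r²u' + ru)(-u'' - u'/r + (λ + P)u) = r u'² - r²P'u²/2 - (flux u)'`. On the right, the
nonlinearities are the partial derivatives of the quartic potential `F(a, b)`, and
`a ∂ₐF + b ∂_bF = 4F`, so they add up to `(r²F(u, v))' + 2rF(u, v)`. Hence
`W = flux u + flux v + r²F(u, v)` has derivative
`r(u'² + v'²) - r²(P'u² + Q'v²)/2 - 2rF(u, v)`, the Pohozaev integrand. The decay hypotheses give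
`W = O((r + r²) e^{-ηr})` on `[0, ∞)`, so `W` vanishes at `0` and at `∞` and `∫₀^∞ W' = 0`.
-/

open Filter Set Asymptotics MeasureTheory Real Topology

section HalfLineDecay

variable {s : Set ℝ} {η C : ℝ} {f g : ℝ → ℝ}

lemma isBigO_principal_one_of_abs_le (h : ∀ x ∈ s, |f x| ≤ C) :
    f =O[𝓟 s] fun _ => (1 : ℝ) :=
  isBigO_principal.2 ⟨C, by simpa using h⟩

lemma isBigO_principal_of_abs_add_abs_add_abs_add_abs_le {a b c d : ℝ → ℝ}
    (h : ∀ x ∈ s, |a x| + |b x| + |c x| + |d x| ≤ C * g x) :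
    a =O[𝓟 s] g ∧ b =O[𝓟 s] g ∧ c =O[𝓟 s] g ∧ d =O[𝓟 s] g := by
  have key : ∀ f : ℝ → ℝ, (∀ x ∈ s, |f x| ≤ |a x| + |b x| + |c x| + |d x|) → f =O[𝓟 s] g :=
    fun f hf => isBigO_principal.2 ⟨|C|, fun x hx => by
      rw [norm_eq_abs, norm_eq_abs, ← abs_mul]
      exact (hf x hx).trans ((h x hx).trans (le_abs_self _))⟩
  refine ⟨key a ?_, key b ?_, key c ?_, key d ?_⟩ <;> intro x _ <;>
    linarith [abs_nonneg (a x), abs_nonneg (b x), abs_nonneg (c x), abs_nonneg (d x)]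

lemma Asymptotics.IsBigO.mul_of_isBigO_one {l : Filter ℝ} {k : ℝ → ℝ}
    (hg : g =O[l] fun _ => (1 : ℝ)) (hf : f =O[l] k) : (fun r => g r * f r) =O[l] k := by
  simpa using hg.mul hf

lemma isBigO_one_of_isBigO_exp (hη : 0 ≤ η) (hf : f =O[𝓟 (Ici 0)] fun r => exp (-η * r)) :
    f =O[𝓟 (Ici 0)] fun _ => (1 : ℝ) :=
  hf.trans <| isBigO_principal.2 ⟨1, fun r (hr : 0 ≤ r) => by
    rw [norm_of_nonneg (exp_pos _).le, norm_one, one_mul, exp_le_one_iff]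
    nlinarith⟩

lemma pow_isBigO_exp (hη : 0 ≤ η) (hf : f =O[𝓟 (Ici 0)] fun r => exp (-η * r)) {n : ℕ}
    (hn : n ≠ 0) : (fun r => f r ^ n) =O[𝓟 (Ici 0)] fun r => exp (-η * r) := by
  obtain ⟨m, rfl⟩ := Nat.exists_eq_succ_of_ne_zero hn
  have hpow := (isBigO_one_of_isBigO_exp hη hf).pow m
  simp only [one_pow] at hpow
  simpa only [pow_succ] using hpow.mul_of_isBigO_one hf

lemma isBigO_weight_of_abs_le (hg : ∀ r ≥ 0, |g r| ≤ r + r ^ 2)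
    (hf : f =O[𝓟 (Ici 0)] fun r => exp (-η * r)) :
    (fun r => g r * f r) =O[𝓟 (Ici 0)] fun r => (r + r ^ 2) * exp (-η * r) :=
  (isBigO_principal.2 ⟨1, fun r (hr : 0 ≤ r) => by
    rw [one_mul, norm_of_nonneg (by positivity : 0 ≤ r + r ^ 2)]; exact hg r hr⟩).mul hf

lemma id_mul_isBigO_weight (hf : f =O[𝓟 (Ici 0)] fun r => exp (-η * r)) :
    (fun r => r * f r) =O[𝓟 (Ici 0)] fun r => (r + r ^ 2) * exp (-η * r) :=
  isBigO_weight_of_abs_le (fun r hr => by rw [abs_of_nonneg hr]; nlinarith) hf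

lemma sq_mul_isBigO_weight (hf : f =O[𝓟 (Ici 0)] fun r => exp (-η * r)) :
    (fun r => r ^ 2 * f r) =O[𝓟 (Ici 0)] fun r => (r + r ^ 2) * exp (-η * r) :=
  isBigO_weight_of_abs_le (fun r hr => by rw [abs_of_nonneg (by positivity)]; linarith) hf

lemma integrableOn_Ioi_weight (hη : 0 < η) :
    IntegrableOn (fun r => (r + r ^ 2) * exp (-η * r)) (Ioi 0) := by
  have h1 := integrableOn_rpow_mul_exp_neg_mul_rpow (s := 1) (by norm_num) one_pos hη
  have h2 := integrableOn_rpow_mul_exp_neg_mul_rpow (s := 2) (by norm_num) one_pos hη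
  simpa only [rpow_one, rpow_two, add_mul, Pi.add_def] using h1.add h2

lemma tendsto_weight_atTop (hη : 0 < η) :
    Tendsto (fun r => (r + r ^ 2) * exp (-η * r)) atTop (𝓝 0) := by
  have h1 := tendsto_rpow_mul_exp_neg_mul_atTop_nhds_zero 1 η hη
  have h2 := tendsto_rpow_mul_exp_neg_mul_atTop_nhds_zero 2 η hη
  simpa only [rpow_one, rpow_two, add_mul, add_zero] using h1.add h2

lemma integrableOn_Ioi_of_isBigO_weight (hη : 0 < η) (hc : ContinuousOn f (Ioi 0))
    (hf : f =O[𝓟 (Ici 0)] fun r => (r + r ^ 2) * exp (-η * r)) : IntegrableOn f (Ioi 0) := by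
  obtain ⟨c, hfc⟩ := isBigO_principal.1 hf
  refine ((integrableOn_Ioi_weight hη).norm.const_mul c).mono'
    (hc.aestronglyMeasurable measurableSet_Ioi) ?_
  exact (ae_restrict_iff' measurableSet_Ioi).2
    (.of_forall fun r hr => hfc r (mem_Ici.2 (le_of_lt hr)))

lemma tendsto_atTop_of_isBigO_weight (hη : 0 < η)
    (hf : f =O[𝓟 (Ici 0)] fun r => (r + r ^ 2) * exp (-η * r)) : Tendsto f atTop (𝓝 0) :=
  (hf.mono (le_principal_iff.2 (Ici_mem_atTop 0))).trans_tendsto (tendsto_weight_atTop hη)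

lemma apply_zero_eq_zero_of_isBigO_weight
    (hf : f =O[𝓟 (Ici 0)] fun r => (r + r ^ 2) * exp (-η * r)) : f 0 = 0 := by
  obtain ⟨c, hfc⟩ := isBigO_principal.1 hf
  simpa using hfc 0 self_mem_Ici

lemma continuousWithinAt_zero_of_isBigO_weight
    (hf : f =O[𝓟 (Ici 0)] fun r => (r + r ^ 2) * exp (-η * r)) :
    ContinuousWithinAt f (Ici 0) 0 := by
  have hweight : Tendsto (fun r => (r + r ^ 2) * exp (-η * r)) (𝓝[≥] 0) (𝓝 0) := by
    simpa using ((by fun_prop : Continuous fun r : ℝ => (r + r ^ 2) * exp (-η * r)).tendsto 0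
      ).mono_left nhdsWithin_le_nhds
  rw [ContinuousWithinAt, apply_zero_eq_zero_of_isBigO_weight hf]
  exact (hf.mono (le_principal_iff.2 self_mem_nhdsWithin)).trans_tendsto hweight

lemma integral_Ioi_eq_zero_of_hasDerivAt_of_isBigO_weight {f' : ℝ → ℝ} (hη : 0 < η)
    (hf : f =O[𝓟 (Ici 0)] fun r => (r + r ^ 2) * exp (-η * r))
    (hderiv : ∀ r ∈ Ioi (0 : ℝ), HasDerivAt f (f' r) r) (hint : IntegrableOn f' (Ioi 0)) :
    ∫ r in Ioi 0, f' r = 0 := by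
  rw [integral_Ioi_of_hasDerivAt_of_tendsto (continuousWithinAt_zero_of_isBigO_weight hf) hderiv
    hint (tendsto_atTop_of_isBigO_weight hη hf), apply_zero_eq_zero_of_isBigO_weight hf, sub_zero]

end HalfLineDecay

noncomputable def pohozaevFlux (V u : ℝ → ℝ) (r : ℝ) : ℝ :=
  r ^ 2 * ((deriv u r ^ 2 - V r * u r ^ 2) / 2) + r * (u r * deriv u r)

lemma hasDerivAt_pohozaevFlux {V u : ℝ → ℝ} {V' g r : ℝ} (hr : r ≠ 0) (hV : HasDerivAt V V' r)
    (hu : DifferentiableAt ℝ u r) (hu' : DifferentiableAt ℝ (deriv u) r)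
    (heq : -deriv (deriv u) r - deriv u r / r + V r * u r = g) :
    HasDerivAt (pohozaevFlux V u)
      (r * deriv u r ^ 2 - r ^ 2 * V' * u r ^ 2 / 2 - r ^ 2 * g * deriv u r - r * g * u r) r := by
  have hu'' : deriv (deriv u) r = V r * u r - g - deriv u r / r := by linarith
  have h := (((hasDerivAt_pow 2 r).mul
    ((((hu'.hasDerivAt.pow 2).sub (hV.mul (hu.hasDerivAt.pow 2))).div_const 2)))).add
    ((hasDerivAt_id r).mul (hu.hasDerivAt.mul hu'.hasDerivAt))
  refine h.congr_deriv ?_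
  simp only [Pi.sub_apply, Pi.mul_apply, Pi.pow_apply, id, hu'', Nat.cast_ofNat]
  field_simp
  ring

noncomputable def couplingPotential (α β γ a b : ℝ) : ℝ :=
  (α * a ^ 4 + γ * b ^ 4 + 2 * β * a ^ 2 * b ^ 2) / 4

lemma hasDerivAt_sq_mul_couplingPotential {α β γ : ℝ} {u v : ℝ → ℝ} {u' v' r : ℝ}
    (hu : HasDerivAt u u' r) (hv : HasDerivAt v v' r) :
    HasDerivAt (fun s => s ^ 2 * couplingPotential α β γ (u s) (v s))
      (2 * r * couplingPotential α β γ (u r) (v r) + r ^ 2 *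
        ((α * u r ^ 3 + β * u r * v r ^ 2) * u' + (γ * v r ^ 3 + β * u r ^ 2 * v r) * v')) r := by
  have h := (hasDerivAt_pow 2 r).mul
    (((((hu.pow 4).const_mul α).add ((hv.pow 4).const_mul γ)).add
      (((hu.pow 2).const_mul (2 * β)).mul (hv.pow 2))).div_const 4)
  refine h.congr_deriv ?_
  simp only [couplingPotential, Pi.add_apply, Pi.mul_apply, Pi.pow_apply, Nat.cast_ofNat]
  ring

noncomputable def radialPohozaev (lam α β γ : ℝ) (P Q u v : ℝ → ℝ) (r : ℝ) : ℝ :=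
  pohozaevFlux (fun s => lam + P s) u r + pohozaevFlux (fun s => lam + Q s) v r
    + r ^ 2 * couplingPotential α β γ (u r) (v r)

lemma ContDiffOn.differentiableAt_of_Ici {n : WithTop ℕ∞} {f : ℝ → ℝ} {a r : ℝ}
    (hf : ContDiffOn ℝ n f (Ici a)) (hn : n ≠ 0) (hr : a < r) : DifferentiableAt ℝ f r :=
  (hf.contDiffAt (Ici_mem_nhds hr)).differentiableAt hn

lemma ContDiffOn.deriv_Ioi_of_Ici {n : ℕ} {f : ℝ → ℝ} {a : ℝ}
    (hf : ContDiffOn ℝ (n + 1) f (Ici a)) : ContDiffOn ℝ n (deriv f) (Ioi a) :=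
  (hf.mono Ioi_subset_Ici_self).deriv_of_isOpen isOpen_Ioi le_rfl

lemma hasDerivAt_radialPohozaev {lam α β γ : ℝ} {P Q u v : ℝ → ℝ} {r : ℝ}
    (hP : ContDiffOn ℝ 1 P (Ici 0)) (hQ : ContDiffOn ℝ 1 Q (Ici 0))
    (hu : ContDiffOn ℝ 2 u (Ici 0)) (hv : ContDiffOn ℝ 2 v (Ici 0)) (hr : 0 < r)
    (hueq : -(deriv (deriv u) r) - deriv u r / r + (lam + P r) * u r
      = α * (u r) ^ 3 + β * u r * (v r) ^ 2)
    (hveq : -(deriv (deriv v) r) - deriv v r / r + (lam + Q r) * v r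
      = γ * (v r) ^ 3 + β * (u r) ^ 2 * v r) :
    HasDerivAt (radialPohozaev lam α β γ P Q u v)
      (r * (|deriv u r| ^ 2 + |deriv v r| ^ 2)
        - r ^ 2 * (deriv P r * (u r) ^ 2 + deriv Q r * (v r) ^ 2) / 2
        - r * (α * (u r) ^ 4 + γ * (v r) ^ 4 + 2 * β * (u r) ^ 2 * (v r) ^ 2) / 2) r := by
  have hdu := hu.differentiableAt_of_Ici two_ne_zero hr
  have hdv := hv.differentiableAt_of_Ici two_ne_zero hr
  have hdu' := (ContDiffOn.deriv_Ioi_of_Ici (n := 1) hu).differentiableOn one_ne_zero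
    |>.differentiableAt (Ioi_mem_nhds hr)
  have hdv' := (ContDiffOn.deriv_Ioi_of_Ici (n := 1) hv).differentiableOn one_ne_zero
    |>.differentiableAt (Ioi_mem_nhds hr)
  have hdP := (hP.differentiableAt_of_Ici one_ne_zero hr).hasDerivAt.const_add lam
  have hdQ := (hQ.differentiableAt_of_Ici one_ne_zero hr).hasDerivAt.const_add lam
  have h := ((hasDerivAt_pohozaevFlux hr.ne' hdP hdu hdu' hueq).add
    (hasDerivAt_pohozaevFlux hr.ne' hdQ hdv hdv' hveq)).add
    (hasDerivAt_sq_mul_couplingPotential (α := α) (β := β) (γ := γ)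
      hdu.hasDerivAt hdv.hasDerivAt)
  refine h.congr_deriv ?_
  simp only [sq_abs, couplingPotential]
  ring

section Bounds

variable {η : ℝ}

lemma isBigO_pohozaevFlux {V u : ℝ → ℝ} (hη : 0 ≤ η) (hV : V =O[𝓟 (Ici 0)] fun _ => (1 : ℝ))
    (hu : u =O[𝓟 (Ici 0)] fun r => exp (-η * r))
    (hu' : deriv u =O[𝓟 (Ici 0)] fun r => exp (-η * r)) :
    pohozaevFlux V u =O[𝓟 (Ici 0)] fun r => (r + r ^ 2) * exp (-η * r) := by
  have hquad : (fun r => (deriv u r ^ 2 - V r * u r ^ 2) / 2) =O[𝓟 (Ici 0)]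
      fun r => exp (-η * r) := by
    simpa only [div_eq_inv_mul] using ((pow_isBigO_exp hη hu' two_ne_zero).sub
      (hV.mul_of_isBigO_one (pow_isBigO_exp hη hu two_ne_zero))).const_mul_left 2⁻¹
  exact (sq_mul_isBigO_weight hquad).add
    (id_mul_isBigO_weight ((isBigO_one_of_isBigO_exp hη hu).mul_of_isBigO_one hu'))

lemma isBigO_quartic {α β γ : ℝ} {u v : ℝ → ℝ} (hη : 0 ≤ η)
    (hu : u =O[𝓟 (Ici 0)] fun r => exp (-η * r)) (hv : v =O[𝓟 (Ici 0)] fun r => exp (-η * r)) :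
    (fun r => α * u r ^ 4 + γ * v r ^ 4 + 2 * β * u r ^ 2 * v r ^ 2) =O[𝓟 (Ici 0)]
      fun r => exp (-η * r) :=
  (((pow_isBigO_exp hη hu four_ne_zero).const_mul_left α).add
    ((pow_isBigO_exp hη hv four_ne_zero).const_mul_left γ)).add
    (((isBigO_one_of_isBigO_exp hη (pow_isBigO_exp hη hv two_ne_zero)).mul_of_isBigO_one
      ((pow_isBigO_exp hη hu two_ne_zero).const_mul_left (2 * β))).congr_left
      fun r => by ring)

lemma isBigO_radialPohozaev {lam α β γ : ℝ} {P Q u v : ℝ → ℝ} (hη : 0 ≤ η)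
    (hP : P =O[𝓟 (Ici 0)] fun _ => (1 : ℝ)) (hQ : Q =O[𝓟 (Ici 0)] fun _ => (1 : ℝ))
    (hu : u =O[𝓟 (Ici 0)] fun r => exp (-η * r))
    (hu' : deriv u =O[𝓟 (Ici 0)] fun r => exp (-η * r))
    (hv : v =O[𝓟 (Ici 0)] fun r => exp (-η * r))
    (hv' : deriv v =O[𝓟 (Ici 0)] fun r => exp (-η * r)) :
    radialPohozaev lam α β γ P Q u v =O[𝓟 (Ici 0)] fun r => (r + r ^ 2) * exp (-η * r) := by
  have hshift : ∀ R : ℝ → ℝ, R =O[𝓟 (Ici 0)] (fun _ => (1 : ℝ)) →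
      (fun s => lam + R s) =O[𝓟 (Ici 0)] fun _ => (1 : ℝ) :=
    fun R hR => (isBigO_const_const lam one_ne_zero _).add hR
  have hcoupling : (fun r => couplingPotential α β γ (u r) (v r)) =O[𝓟 (Ici 0)]
      fun r => exp (-η * r) := by
    simpa only [couplingPotential, div_eq_inv_mul] using
      (isBigO_quartic (α := α) (β := β) (γ := γ) hη hu hv).const_mul_left 4⁻¹
  exact ((isBigO_pohozaevFlux hη (hshift P hP) hu hu').add
    (isBigO_pohozaevFlux hη (hshift Q hQ) hv hv')).add (sq_mul_isBigO_weight hcoupling)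

variable {u v : ℝ → ℝ}

lemma integrableOn_kinetic (hη : 0 < η) (hcu : ContinuousOn u (Ioi 0))
    (hcv : ContinuousOn v (Ioi 0)) (hu : u =O[𝓟 (Ici 0)] fun r => exp (-η * r))
    (hv : v =O[𝓟 (Ici 0)] fun r => exp (-η * r)) :
    IntegrableOn (fun r => r * (|u r| ^ 2 + |v r| ^ 2)) (Ioi 0) :=
  integrableOn_Ioi_of_isBigO_weight hη (by fun_prop) <| id_mul_isBigO_weight <|
    (pow_isBigO_exp hη.le hu.abs_left two_ne_zero).add
      (pow_isBigO_exp hη.le hv.abs_left two_ne_zero)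

lemma integrableOn_potential_deriv {P' Q' : ℝ → ℝ} (hη : 0 < η) (hcu : ContinuousOn u (Ioi 0))
    (hcv : ContinuousOn v (Ioi 0)) (hcP' : ContinuousOn P' (Ioi 0))
    (hcQ' : ContinuousOn Q' (Ioi 0)) (hP' : P' =O[𝓟 (Ici 0)] fun _ => (1 : ℝ))
    (hQ' : Q' =O[𝓟 (Ici 0)] fun _ => (1 : ℝ)) (hu : u =O[𝓟 (Ici 0)] fun r => exp (-η * r))
    (hv : v =O[𝓟 (Ici 0)] fun r => exp (-η * r)) :
    IntegrableOn (fun r => r ^ 2 * (P' r * u r ^ 2 + Q' r * v r ^ 2)) (Ioi 0) :=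
  integrableOn_Ioi_of_isBigO_weight hη (by fun_prop) <| sq_mul_isBigO_weight <|
    (hP'.mul_of_isBigO_one (pow_isBigO_exp hη.le hu two_ne_zero)).add
      (hQ'.mul_of_isBigO_one (pow_isBigO_exp hη.le hv two_ne_zero))

lemma integrableOn_quartic {α β γ : ℝ} (hη : 0 < η) (hcu : ContinuousOn u (Ioi 0))
    (hcv : ContinuousOn v (Ioi 0)) (hu : u =O[𝓟 (Ici 0)] fun r => exp (-η * r))
    (hv : v =O[𝓟 (Ici 0)] fun r => exp (-η * r)) :
    IntegrableOn (fun r => r * (α * u r ^ 4 + γ * v r ^ 4 + 2 * β * u r ^ 2 * v r ^ 2))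
      (Ioi 0) :=
  integrableOn_Ioi_of_isBigO_weight hη (by fun_prop) <|
    id_mul_isBigO_weight (isBigO_quartic hη.le hu hv)

end Bounds

theorem radial_pohozaev_identity_general (lam α β γ : ℝ) (P Q u v : ℝ → ℝ)
    (hP : ContDiffOn ℝ 1 P (Set.Ici 0)) (hQ : ContDiffOn ℝ 1 Q (Set.Ici 0))
    (hPbdd : ∃ C : ℝ, ∀ r ≥ (0:ℝ), |P r| ≤ C ∧ |deriv P r| ≤ C)
    (hQbdd : ∃ C : ℝ, ∀ r ≥ (0:ℝ), |Q r| ≤ C ∧ |deriv Q r| ≤ C)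
    (hu : ContDiffOn ℝ 2 u (Set.Ici 0)) (hv : ContDiffOn ℝ 2 v (Set.Ici 0))
    (hueq : ∀ r > (0:ℝ), -(deriv (deriv u) r) - deriv u r / r + (lam + P r) * u r
      = α * (u r) ^ 3 + β * u r * (v r) ^ 2)
    (hveq : ∀ r > (0:ℝ), -(deriv (deriv v) r) - deriv v r / r + (lam + Q r) * v r
      = γ * (v r) ^ 3 + β * (u r) ^ 2 * v r)
    (hdecay : ∃ C > (0:ℝ), ∃ η > (0:ℝ), ∀ r ≥ (0:ℝ),
      |u r| + |deriv u r| + |v r| + |deriv v r| ≤ C * Real.exp (-η * r)) :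
    2 * (∫ r in Set.Ioi (0:ℝ), r * (|deriv u r| ^ 2 + |deriv v r| ^ 2))
        - (∫ r in Set.Ioi (0:ℝ), r ^ 2 * (deriv P r * (u r) ^ 2 + deriv Q r * (v r) ^ 2))
      = ∫ r in Set.Ioi (0:ℝ), r * (α * (u r) ^ 4 + γ * (v r) ^ 4
          + 2 * β * (u r) ^ 2 * (v r) ^ 2) := by
  obtain ⟨C, -, η, hη, hdec⟩ := hdecay
  obtain ⟨hOu, hOu', hOv, hOv'⟩ :=
    isBigO_principal_of_abs_add_abs_add_abs_add_abs_le (s := Ici 0) hdec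
  obtain ⟨CP, hCP⟩ := hPbdd
  obtain ⟨CQ, hCQ⟩ := hQbdd
  have hcu := hu.continuousOn.mono (Ioi_subset_Ici_self (a := (0 : ℝ)))
  have hcv := hv.continuousOn.mono (Ioi_subset_Ici_self (a := (0 : ℝ)))
  have hcu' := (ContDiffOn.deriv_Ioi_of_Ici (n := 1) hu).continuousOn
  have hcv' := (ContDiffOn.deriv_Ioi_of_Ici (n := 1) hv).continuousOn
  have hcP' := (ContDiffOn.deriv_Ioi_of_Ici (n := 0) hP).continuousOn
  have hcQ' := (ContDiffOn.deriv_Ioi_of_Ici (n := 0) hQ).continuousOn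
  have hI1 := integrableOn_kinetic hη hcu' hcv' hOu' hOv'
  have hI2 := integrableOn_potential_deriv hη hcu hcv hcP' hcQ'
    (isBigO_principal_one_of_abs_le fun r hr => (hCP r hr).2)
    (isBigO_principal_one_of_abs_le fun r hr => (hCQ r hr).2) hOu hOv
  have hI3 := integrableOn_quartic (α := α) (β := β) (γ := γ) hη hcu hcv hOu hOv
  have hzero := integral_Ioi_eq_zero_of_hasDerivAt_of_isBigO_weight hη
    (isBigO_radialPohozaev (lam := lam) (α := α) (β := β) (γ := γ) hη.le
      (isBigO_principal_one_of_abs_le fun r hr => (hCP r hr).1)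
      (isBigO_principal_one_of_abs_le fun r hr => (hCQ r hr).1) hOu hOu' hOv hOv')
    (fun r hr => hasDerivAt_radialPohozaev hP hQ hu hv hr (hueq r hr) (hveq r hr))
    ((hI1.sub (hI2.div_const 2)).sub (hI3.div_const 2))
  rw [integral_sub, integral_sub, integral_div, integral_div] at hzero
  · linarith
  exacts [hI1, hI2.div_const 2, hI1.sub (hI2.div_const 2), hI3.div_const 2]

theorem radial_pohozaev_identity (lam α β γ : ℝ) (P Q u v : ℝ → ℝ)
    (hP : ContDiffOn ℝ 1 P (Set.Ici 0)) (hQ : ContDiffOn ℝ 1 Q (Set.Ici 0))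
    (hPbdd : ∃ C : ℝ, ∀ r ≥ (0:ℝ), |P r| ≤ C ∧ |deriv P r| ≤ C)
    (hQbdd : ∃ C : ℝ, ∀ r ≥ (0:ℝ), |Q r| ≤ C ∧ |deriv Q r| ≤ C)
    (hu : ContDiffOn ℝ 2 u (Set.Ici 0)) (hv : ContDiffOn ℝ 2 v (Set.Ici 0))
    (hu0 : deriv u 0 = 0) (hv0 : deriv v 0 = 0)
    (hueq : ∀ r > (0:ℝ), -(deriv (deriv u) r) - deriv u r / r + (lam + P r) * u r
      = α * (u r) ^ 3 + β * u r * (v r) ^ 2)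
    (hveq : ∀ r > (0:ℝ), -(deriv (deriv v) r) - deriv v r / r + (lam + Q r) * v r
      = γ * (v r) ^ 3 + β * (u r) ^ 2 * v r)
    (hdecay : ∃ C > (0:ℝ), ∃ η > (0:ℝ), ∀ r ≥ (0:ℝ),
      |u r| + |deriv u r| + |v r| + |deriv v r| ≤ C * Real.exp (-η * r)) :
    2 * (∫ r in Set.Ioi (0:ℝ), r * (|deriv u r| ^ 2 + |deriv v r| ^ 2))
        - (∫ r in Set.Ioi (0:ℝ), r ^ 2 * (deriv P r * (u r) ^ 2 + deriv Q r * (v r) ^ 2))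
      = ∫ r in Set.Ioi (0:ℝ), r * (α * (u r) ^ 4 + γ * (v r) ^ 4
          + 2 * β * (u r) ^ 2 * (v r) ^ 2) :=
  radial_pohozaev_identity_general lam α β γ P Q u v hP hQ hPbdd hQbdd hu hv hueq hveq hdecay
end

section
/- Let α > 0, γ > 0 and β ∈ (-√(αγ), 0) ∪ (0, min{α,γ}) ∪ (max{α,γ}, +∞). Then (γ-β)/(αγ-β²) > 0 and (α-β)/(αγ-β²) > 0, and for any twice differentiable function w : ℝ → ℝ satisfying -w''(r) + w(r) = w(r)³ for all r ∈ ℝ, the pair U = √((γ-β)/(αγ-β²))·w and V = √((α-β)/(αγ-β²))·w satisfies -U''(r) + U(r) = α·U(r)³ + β·U(r)·V(r)² and -V''(r) + V(r) = γ·V(r)³ + β·U(r)²·V(r) for all r ∈ ℝ. -/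
/-! Both components are multiples of the same scalar profile `w`, so the system collapses to
`-w'' + w = w³` once the squared amplitudes `a = (γ - β)/(αγ - β²)`, `b = (α - β)/(αγ - β²)`
solve the linear system `α a + β b = 1`, `β a + γ b = 1`. Their positivity comes from
`γ - β`, `α - β` and `αγ - β²` having a common sign on each part of the range of `β`. -/

open Real

theorem deriv_deriv_const_mul_of_nls {𝕜 : Type*} [NontriviallyNormedField 𝕜] {w : 𝕜 → 𝕜}
    (hw : ∀ r, -deriv (deriv w) r + w r = w r ^ 3) (c : 𝕜) (r : 𝕜) :
    -deriv (deriv fun s => c * w s) r + c * w r = c * w r ^ 3 := by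
  rw [deriv_const_mul_field', deriv_const_mul_field']
  linear_combination c * hw r

theorem sqrt_mul_solves_coupled_nls {w : ℝ → ℝ} (hw : ∀ r, -deriv (deriv w) r + w r = w r ^ 3)
    {a b p q : ℝ} (hp : 0 ≤ p) (hq : 0 ≤ q) (h : a * p + b * q = 1) (r : ℝ) :
    -deriv (deriv fun s => √p * w s) r + √p * w r
      = a * (√p * w r) ^ 3 + b * (√p * w r) * (√q * w r) ^ 2 := by
  rw [deriv_deriv_const_mul_of_nls hw]
  linear_combination (-(√p * w r ^ 3)) * h - a * w r ^ 3 * √p * sq_sqrt hp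
    - b * w r ^ 3 * √p * sq_sqrt hq

theorem coupling_sign_cases {α β γ : ℝ} (hα : 0 < α) (hγ : 0 < γ)
    (hβ : β ∈ Set.Ioo (-√(α * γ)) 0 ∪ Set.Ioo 0 (min α γ) ∪ Set.Ioi (max α γ)) :
    (β < α ∧ β < γ ∧ β ^ 2 < α * γ) ∨ (α < β ∧ γ < β ∧ α * γ < β ^ 2) := by
  rcases hβ with (⟨hlo, hneg⟩ | ⟨hpos, hmin⟩) | hmax
  · exact Or.inl ⟨by linarith, by linarith,
      sq_lt.mpr ⟨hlo, hneg.trans_le (sqrt_nonneg _)⟩⟩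
  · obtain ⟨hβα, hβγ⟩ := lt_min_iff.mp hmin
    exact Or.inl ⟨hβα, hβγ, by nlinarith⟩
  · obtain ⟨hαβ, hγβ⟩ := max_lt_iff.mp (Set.mem_Ioi.mp hmax)
    exact Or.inr ⟨hαβ, hγβ, by nlinarith⟩

theorem amplitudes_pos {α β γ : ℝ}
    (h : (β < α ∧ β < γ ∧ β ^ 2 < α * γ) ∨ (α < β ∧ γ < β ∧ α * γ < β ^ 2)) :
    0 < (γ - β) / (α * γ - β ^ 2) ∧ 0 < (α - β) / (α * γ - β ^ 2) := by
  rcases h with ⟨hβα, hβγ, hdisc⟩ | ⟨hαβ, hγβ, hdisc⟩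
  · exact ⟨div_pos (by linarith) (by linarith), div_pos (by linarith) (by linarith)⟩
  · exact ⟨div_pos_of_neg_of_neg (by linarith) (by linarith),
      div_pos_of_neg_of_neg (by linarith) (by linarith)⟩

theorem amplitudes_solve {α β γ : ℝ} (hdisc : α * γ - β ^ 2 ≠ 0) :
    α * ((γ - β) / (α * γ - β ^ 2)) + β * ((α - β) / (α * γ - β ^ 2)) = 1 ∧
      γ * ((α - β) / (α * γ - β ^ 2)) + β * ((γ - β) / (α * γ - β ^ 2)) = 1 := by
  constructor <;>
    rw [← mul_div_assoc, ← mul_div_assoc, ← add_div, div_eq_one_iff_eq hdisc] <;> ring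

theorem synchronized_profile (α β γ : ℝ) (hα : 0 < α) (hγ : 0 < γ)
    (hβ : β ∈ Set.Ioo (-Real.sqrt (α * γ)) 0 ∪ Set.Ioo 0 (min α γ) ∪ Set.Ioi (max α γ)) :
    0 < (γ - β) / (α * γ - β ^ 2) ∧ 0 < (α - β) / (α * γ - β ^ 2) ∧
    ∀ w : ℝ → ℝ, Differentiable ℝ w → Differentiable ℝ (deriv w) →
      (∀ r : ℝ, -(deriv (deriv w) r) + w r = (w r) ^ 3) →
      (∀ r : ℝ,
          -(deriv (deriv (fun s => Real.sqrt ((γ - β) / (α * γ - β ^ 2)) * w s)) r)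
            + Real.sqrt ((γ - β) / (α * γ - β ^ 2)) * w r
          = α * (Real.sqrt ((γ - β) / (α * γ - β ^ 2)) * w r) ^ 3
            + β * (Real.sqrt ((γ - β) / (α * γ - β ^ 2)) * w r)
              * (Real.sqrt ((α - β) / (α * γ - β ^ 2)) * w r) ^ 2) ∧
      (∀ r : ℝ,
          -(deriv (deriv (fun s => Real.sqrt ((α - β) / (α * γ - β ^ 2)) * w s)) r)
            + Real.sqrt ((α - β) / (α * γ - β ^ 2)) * w r
          = γ * (Real.sqrt ((α - β) / (α * γ - β ^ 2)) * w r) ^ 3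
            + β * (Real.sqrt ((γ - β) / (α * γ - β ^ 2)) * w r) ^ 2
              * (Real.sqrt ((α - β) / (α * γ - β ^ 2)) * w r)) := by
  have hsign := coupling_sign_cases hα hγ hβ
  obtain ⟨ha, hb⟩ := amplitudes_pos hsign
  have hdisc : α * γ - β ^ 2 ≠ 0 := by
    rcases hsign with ⟨-, -, h⟩ | ⟨-, -, h⟩ <;> linarith
  obtain ⟨hU, hV⟩ := amplitudes_solve hdisc
  refine ⟨ha, hb, fun w _ _ hw => ⟨fun r => ?_, fun r => ?_⟩⟩
  · exact sqrt_mul_solves_coupled_nls hw ha.le hb.le hU r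
  · rw [sqrt_mul_solves_coupled_nls hw hb.le ha.le hV r]
    ring
end

section
/- For every real q with 2 ≤ q < ∞ there exists a constant C > 0 such that for every λ > 0 and every continuously differentiable, compactly supported function u : ℝ² → ℝ, one has (∫_{ℝ²} |u(x)|^q dx)^{1/q} ≤ C·λ^{-1/q}·(∫_{ℝ²} (|∇u(x)|² + λ·u(x)²) dx)^{1/2}. -/
/-!
The Gagliardo–Nirenberg–Sobolev inequality `‖v‖₂ ≤ K ‖∇v‖₁` in the plane, applied to
`v = |u|^(q/2)` and followed by Cauchy–Schwarz, gives
`∫ |u|^q ≤ K (q/2)² ∫ |u|^(q-2) · ∫ |∇u|²`.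
For `q ≥ 4`, Hölder interpolation of `∫ |u|^(q-2)` between `∫ |u|²` and `∫ |u|^q` lets the
latter be absorbed into the left side, which leaves the Gagliardo–Nirenberg bound
`∫ |u|^q ≤ C ∫ |u|² · (∫ |∇u|²)^((q-2)/2)`; for `2 ≤ q ≤ 4` the exponent `q - 2` is too small
for this, and the bound follows instead by interpolating between `q = 2` and `q = 4`.
Writing `∫ |u|² = λ⁻¹ ∫ λ u²` and bounding `∫ λ u²` and `∫ |∇u|²` by their sum then gives the
scaled inequality.
-/

open MeasureTheory Module
open scoped ENNReal NNReal

namespace ENNReal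

theorem lintegral_rpow_le_interpolate {α : Type*} [MeasurableSpace α] {μ : Measure α}
    {f : α → ℝ≥0∞} (hf : AEMeasurable f μ) {s t θ : ℝ} (hs : 0 ≤ s) (ht : 0 ≤ t)
    (hθ₀ : 0 ≤ θ) (hθ₁ : θ ≤ 1) :
    ∫⁻ x, f x ^ ((1 - θ) * s + θ * t) ∂μ
      ≤ (∫⁻ x, f x ^ s ∂μ) ^ (1 - θ) * (∫⁻ x, f x ^ t ∂μ) ^ θ := by
  have hsplit : ∀ x, f x ^ ((1 - θ) * s + θ * t) = (f x ^ s) ^ (1 - θ) * (f x ^ t) ^ θ :=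
    fun x ↦ by
      rw [← rpow_mul, ← rpow_mul, mul_comm s, mul_comm t,
        rpow_add_of_nonneg _ _ (by nlinarith) (by positivity)]
  simp_rw [hsplit]
  exact lintegral_mul_norm_pow_le (hf.pow_const s) (hf.pow_const t) (by linarith) hθ₀ (by ring)

theorem lintegral_mul_sq_le {α : Type*} [MeasurableSpace α] {μ : Measure α}
    {f g : α → ℝ≥0∞} (hf : AEMeasurable f μ) (hg : AEMeasurable g μ) :
    (∫⁻ x, f x * g x ∂μ) ^ (2 : ℝ) ≤ (∫⁻ x, f x ^ (2 : ℝ) ∂μ) * ∫⁻ x, g x ^ (2 : ℝ) ∂μ := by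
  calc (∫⁻ x, f x * g x ∂μ) ^ (2 : ℝ)
      ≤ ((∫⁻ x, f x ^ (2 : ℝ) ∂μ) ^ (1 / 2 : ℝ) * (∫⁻ x, g x ^ (2 : ℝ) ∂μ) ^ (1 / 2 : ℝ))
          ^ (2 : ℝ) :=
        rpow_le_rpow (lintegral_mul_le_Lp_mul_Lq μ Real.HolderConjugate.two_two hf hg) zero_le_two
    _ = _ := by
      rw [mul_rpow_of_nonneg _ _ zero_le_two, ← rpow_mul, ← rpow_mul]
      norm_num

theorem rpow_le_of_le_mul_rpow {a b : ℝ≥0∞} {θ : ℝ} (hθ₀ : 0 ≤ θ) (hθ₁ : θ < 1) (ha : a ≠ ⊤)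
    (h : a ≤ b * a ^ θ) : a ^ (1 - θ) ≤ b := by
  rcases eq_or_ne a 0 with rfl | ha₀
  · simp [zero_rpow_of_pos (sub_pos.2 hθ₁)]
  rw [← ENNReal.mul_le_mul_iff_left (rpow_pos (pos_iff_ne_zero.2 ha₀) ha).ne'
    (rpow_ne_top_of_nonneg hθ₀ ha), ← rpow_add_of_nonneg _ _ (by linarith) hθ₀, sub_add_cancel,
    rpow_one]
  exact h

end ENNReal

theorem Continuous.lintegral_enorm_rpow_ne_top {X F : Type*} [TopologicalSpace X]
    [MeasurableSpace X] [OpensMeasurableSpace X] {μ : Measure X} [IsFiniteMeasureOnCompacts μ]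
    [NormedAddCommGroup F] {f : X → F} (hf : Continuous f) (h2f : HasCompactSupport f)
    {r : ℝ} (hr : 0 < r) : ∫⁻ x, ‖f x‖ₑ ^ r ∂μ ≠ ⊤ := by
  have hp : ENNReal.ofReal r ≠ 0 := ENNReal.ofReal_ne_zero_iff.2 hr
  simpa [ENNReal.toReal_ofReal hr.le] using
    (lintegral_rpow_enorm_lt_top_of_eLpNorm_lt_top hp ENNReal.ofReal_ne_top
      (hf.memLp_of_hasCompactSupport (μ := μ) (p := ENNReal.ofReal r) h2f).eLpNorm_lt_top).ne

theorem integral_norm_rpow_eq_toReal_lintegral {α F : Type*} [MeasurableSpace α] {μ : Measure α}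
    [NormedAddCommGroup F] {f : α → F} (hf : AEStronglyMeasurable f μ) {r : ℝ} (hr : 0 ≤ r) :
    ∫ x, ‖f x‖ ^ r ∂μ = (∫⁻ x, ‖f x‖ₑ ^ r ∂μ).toReal := by
  rw [integral_eq_lintegral_of_nonneg_ae (ae_of_all _ fun x ↦ by positivity)
    (hf.norm.aemeasurable.pow_const r).aestronglyMeasurable]
  simp_rw [← ENNReal.ofReal_rpow_of_nonneg (norm_nonneg _) hr, ofReal_norm]

section Sobolev

variable {E F : Type*} [NormedAddCommGroup E] [NormedSpace ℝ E] [MeasurableSpace E]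
  [BorelSpace E] [FiniteDimensional ℝ E] (μ : Measure E) [μ.IsAddHaarMeasure]
  [NormedAddCommGroup F] [InnerProductSpace ℝ F] {u : E → F}

theorem lintegral_enorm_rpow_le_lintegral_rpow_mul_fderiv (hu : ContDiff ℝ 1 u)
    (h2u : HasCompactSupport u) {γ : ℝ≥0} (hγ : 1 < γ) {p : ℝ}
    (hp : Real.HolderConjugate (finrank ℝ E) p) :
    ∫⁻ x, ‖u x‖ₑ ^ (γ * p) ∂μ ≤ lintegralPowLePowLIntegralFDerivConst μ p *
      (γ * ∫⁻ x, ‖u x‖ₑ ^ ((γ : ℝ) - 1) * ‖fderiv ℝ u x‖ₑ ∂μ) ^ p := by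
  have h1γ : (1 : ℝ) < γ := hγ
  have hv := lintegral_pow_le_pow_lintegral_fderiv μ (hu.norm_rpow h1γ)
    (h2u.norm.rpow_const (zero_lt_one.trans h1γ).ne') hp
  have hlhs : ∀ x, ‖‖u x‖ ^ (γ : ℝ)‖ₑ ^ p = ‖u x‖ₑ ^ (γ * p) := fun x ↦ by
    rw [Real.enorm_rpow_of_nonneg (norm_nonneg _) γ.coe_nonneg, enorm_norm, ENNReal.rpow_mul]
  simp_rw [hlhs] at hv
  refine hv.trans ?_
  gcongr
  case h₂ => exact hp.symm.nonneg
  rw [← lintegral_const_mul' _ _ ENNReal.coe_ne_top]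
  refine lintegral_mono fun x ↦ ?_
  rw [← mul_assoc]
  exact enorm_fderiv_norm_rpow_le (hu.differentiable one_ne_zero) hγ

theorem lintegral_enorm_rpow_le_of_finrank_eq_two (hE : finrank ℝ E = 2) (hu : ContDiff ℝ 1 u)
    (h2u : HasCompactSupport u) {γ : ℝ≥0} (hγ : 1 < γ) :
    ∫⁻ x, ‖u x‖ₑ ^ (2 * (γ : ℝ)) ∂μ ≤ lintegralPowLePowLIntegralFDerivConst μ 2 * γ ^ 2 *
      (∫⁻ x, ‖u x‖ₑ ^ (2 * ((γ : ℝ) - 1)) ∂μ) * ∫⁻ x, ‖fderiv ℝ u x‖ₑ ^ (2 : ℝ) ∂μ := by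
  have hp : Real.HolderConjugate (finrank ℝ E) 2 := by
    rw [hE]; exact_mod_cast Real.HolderConjugate.two_two
  have hu' := hu.continuous
  have hDu := hu.continuous_fderiv one_ne_zero
  have hCS := ENNReal.lintegral_mul_sq_le (μ := μ)
    (f := fun x ↦ ‖u x‖ₑ ^ ((γ : ℝ) - 1)) (g := fun x ↦ ‖fderiv ℝ u x‖ₑ) (by fun_prop)
    (by fun_prop)
  simp_rw [← ENNReal.rpow_mul, mul_comm _ (2 : ℝ)] at hCS
  calc ∫⁻ x, ‖u x‖ₑ ^ (2 * (γ : ℝ)) ∂μ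
      = ∫⁻ x, ‖u x‖ₑ ^ ((γ : ℝ) * 2) ∂μ := by simp_rw [mul_comm (2 : ℝ)]
    _ ≤ lintegralPowLePowLIntegralFDerivConst μ 2 *
        (γ * ∫⁻ x, ‖u x‖ₑ ^ ((γ : ℝ) - 1) * ‖fderiv ℝ u x‖ₑ ∂μ) ^ (2 : ℝ) :=
      lintegral_enorm_rpow_le_lintegral_rpow_mul_fderiv μ hu h2u hγ hp
    _ ≤ _ := by
      rw [ENNReal.mul_rpow_of_nonneg _ _ zero_le_two, ENNReal.rpow_two, mul_assoc, mul_assoc]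
      gcongr

theorem lintegral_enorm_rpow_le_of_four_le (hE : finrank ℝ E = 2) (hu : ContDiff ℝ 1 u)
    (h2u : HasCompactSupport u) {q : ℝ} (hq : 4 ≤ q) :
    ∫⁻ x, ‖u x‖ₑ ^ q ∂μ
      ≤ (lintegralPowLePowLIntegralFDerivConst μ 2 * ENNReal.ofReal (q / 2) ^ 2) ^ ((q - 2) / 2) *
        (∫⁻ x, ‖u x‖ₑ ^ (2 : ℝ) ∂μ) * (∫⁻ x, ‖fderiv ℝ u x‖ₑ ^ (2 : ℝ) ∂μ) ^ ((q - 2) / 2) := by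
  set K : ℝ≥0∞ := lintegralPowLePowLIntegralFDerivConst μ 2 * ENNReal.ofReal (q / 2) ^ 2
  set P := ∫⁻ x, ‖u x‖ₑ ^ q ∂μ
  set S := ∫⁻ x, ‖u x‖ₑ ^ (2 : ℝ) ∂μ
  set D := ∫⁻ x, ‖fderiv ℝ u x‖ₑ ^ (2 : ℝ) ∂μ
  set θ : ℝ := (q - 4) / (q - 2)
  have hq₂ : q - 2 ≠ 0 := by linarith
  have hθ₀ : 0 ≤ θ := div_nonneg (by linarith) (by linarith)
  have hθ₁ : θ < 1 := (div_lt_one (by linarith)).2 (by linarith)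
  have hθq : (1 - θ) * ((q - 2) / 2) = 1 := by
    simp only [θ]; field_simp; ring
  have hcore : P ≤ K * (∫⁻ x, ‖u x‖ₑ ^ (q - 2) ∂μ) * D := by
    have hγ : ((q / 2).toNNReal : ℝ) = q / 2 := Real.coe_toNNReal _ (by linarith)
    have h := lintegral_enorm_rpow_le_of_finrank_eq_two μ hE hu h2u (γ := (q / 2).toNNReal)
      (by rw [← NNReal.coe_lt_coe, hγ]; push_cast; linarith)
    rwa [hγ, show 2 * (q / 2) = q by ring, show 2 * (q / 2 - 1) = q - 2 by ring] at h
  have hinterp : ∫⁻ x, ‖u x‖ₑ ^ (q - 2) ∂μ ≤ S ^ (1 - θ) * P ^ θ := by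
    have h := ENNReal.lintegral_rpow_le_interpolate (μ := μ) (f := fun x ↦ ‖u x‖ₑ)
      (t := q) hu.continuous.enorm.aemeasurable zero_le_two (by linarith) hθ₀ hθ₁.le
    rwa [show (1 - θ) * 2 + θ * q = q - 2 by simp only [θ]; field_simp; ring] at h
  have habsorb : P ^ (1 - θ) ≤ K * S ^ (1 - θ) * D := by
    refine ENNReal.rpow_le_of_le_mul_rpow hθ₀ hθ₁
      (hu.continuous.lintegral_enorm_rpow_ne_top h2u (by linarith)) ?_
    calc P ≤ K * (S ^ (1 - θ) * P ^ θ) * D := hcore.trans (by gcongr)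
      _ = K * S ^ (1 - θ) * D * P ^ θ := by ring
  have hq' : 0 ≤ (q - 2) / 2 := by linarith
  calc P = (P ^ (1 - θ)) ^ ((q - 2) / 2) := by rw [← ENNReal.rpow_mul, hθq, ENNReal.rpow_one]
    _ ≤ (K * S ^ (1 - θ) * D) ^ ((q - 2) / 2) := by gcongr
    _ = K ^ ((q - 2) / 2) * S * D ^ ((q - 2) / 2) := by
      rw [ENNReal.mul_rpow_of_nonneg _ _ hq', ENNReal.mul_rpow_of_nonneg _ _ hq',
        ← ENNReal.rpow_mul, hθq, ENNReal.rpow_one]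

theorem lintegral_enorm_rpow_le_of_le_four (hE : finrank ℝ E = 2) (hu : ContDiff ℝ 1 u)
    (h2u : HasCompactSupport u) {q : ℝ} (hq₂ : 2 ≤ q) (hq₄ : q ≤ 4) :
    ∫⁻ x, ‖u x‖ₑ ^ q ∂μ
      ≤ (lintegralPowLePowLIntegralFDerivConst μ 2 * 4) ^ ((q - 2) / 2) *
        (∫⁻ x, ‖u x‖ₑ ^ (2 : ℝ) ∂μ) * (∫⁻ x, ‖fderiv ℝ u x‖ₑ ^ (2 : ℝ) ∂μ) ^ ((q - 2) / 2) := by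
  set K : ℝ≥0∞ := lintegralPowLePowLIntegralFDerivConst μ 2 * 4
  set S := ∫⁻ x, ‖u x‖ₑ ^ (2 : ℝ) ∂μ
  set D := ∫⁻ x, ‖fderiv ℝ u x‖ₑ ^ (2 : ℝ) ∂μ
  set θ : ℝ := (q - 2) / 2
  have hθ₀ : 0 ≤ θ := by simp only [θ]; linarith
  have hθ₁ : θ ≤ 1 := by simp only [θ]; linarith
  have hinterp := ENNReal.lintegral_rpow_le_interpolate (μ := μ) (f := fun x ↦ ‖u x‖ₑ)
    hu.continuous.enorm.aemeasurable zero_le_two zero_le_four hθ₀ hθ₁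
  have hfour : ∫⁻ x, ‖u x‖ₑ ^ (4 : ℝ) ∂μ ≤ K * S * D := by
    convert lintegral_enorm_rpow_le_of_finrank_eq_two μ hE hu h2u (γ := 2) one_lt_two using 4 <;>
      norm_num
  calc ∫⁻ x, ‖u x‖ₑ ^ q ∂μ = ∫⁻ x, ‖u x‖ₑ ^ ((1 - θ) * 2 + θ * 4) ∂μ := by
        simp only [θ]; ring_nf
    _ ≤ S ^ (1 - θ) * (∫⁻ x, ‖u x‖ₑ ^ (4 : ℝ) ∂μ) ^ θ := hinterp
    _ ≤ S ^ (1 - θ) * (K * S * D) ^ θ := by gcongr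
    _ = K ^ θ * (S ^ (1 - θ) * S ^ θ) * D ^ θ := by
      rw [ENNReal.mul_rpow_of_nonneg _ _ hθ₀, ENNReal.mul_rpow_of_nonneg _ _ hθ₀]
      ring
    _ = K ^ θ * S * D ^ θ := by
      rw [← ENNReal.rpow_add_of_nonneg _ _ (by linarith) hθ₀, sub_add_cancel, ENNReal.rpow_one]

theorem exists_lintegral_enorm_rpow_le (hE : finrank ℝ E = 2) {q : ℝ} (hq : 2 ≤ q) :
    ∃ C : ℝ≥0∞, C ≠ ⊤ ∧ ∀ u : E → F, ContDiff ℝ 1 u → HasCompactSupport u →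
      ∫⁻ x, ‖u x‖ₑ ^ q ∂μ ≤
        C * (∫⁻ x, ‖u x‖ₑ ^ (2 : ℝ) ∂μ) * (∫⁻ x, ‖fderiv ℝ u x‖ₑ ^ (2 : ℝ) ∂μ) ^ ((q - 2) / 2) := by
  have hq' : 0 ≤ (q - 2) / 2 := by linarith
  rcases le_total q 4 with hq₄ | hq₄
  · exact ⟨_, ENNReal.rpow_ne_top_of_nonneg hq' (by finiteness),
      fun u hu h2u ↦ lintegral_enorm_rpow_le_of_le_four μ hE hu h2u hq hq₄⟩
  · exact ⟨_, ENNReal.rpow_ne_top_of_nonneg hq' (by finiteness),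
      fun u hu h2u ↦ lintegral_enorm_rpow_le_of_four_le μ hE hu h2u hq₄⟩

theorem exists_integral_norm_rpow_le (hE : finrank ℝ E = 2) {q : ℝ} (hq : 2 ≤ q) :
    ∃ c > (0 : ℝ), ∀ u : E → F, ContDiff ℝ 1 u → HasCompactSupport u →
      ∫ x, ‖u x‖ ^ q ∂μ ≤
        c * (∫ x, ‖u x‖ ^ 2 ∂μ) * (∫ x, ‖fderiv ℝ u x‖ ^ 2 ∂μ) ^ ((q - 2) / 2) := by
  obtain ⟨C, hC, hCu⟩ := exists_lintegral_enorm_rpow_le μ (F := F) hE hq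
  refine ⟨C.toReal + 1, by positivity, fun u hu h2u ↦ ?_⟩
  have hu' := hu.continuous
  have hDu := hu.continuous_fderiv one_ne_zero
  have hS := hu'.lintegral_enorm_rpow_ne_top (μ := μ) h2u two_pos
  have hD := hDu.lintegral_enorm_rpow_ne_top (μ := μ) (h2u.fderiv ℝ) two_pos
  simp_rw [← Real.rpow_two]
  rw [integral_norm_rpow_eq_toReal_lintegral hu'.aestronglyMeasurable (by linarith),
    integral_norm_rpow_eq_toReal_lintegral hu'.aestronglyMeasurable zero_le_two,
    integral_norm_rpow_eq_toReal_lintegral hDu.aestronglyMeasurable zero_le_two]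
  calc (∫⁻ x, ‖u x‖ₑ ^ q ∂μ).toReal
      ≤ (C * (∫⁻ x, ‖u x‖ₑ ^ (2 : ℝ) ∂μ) *
          (∫⁻ x, ‖fderiv ℝ u x‖ₑ ^ (2 : ℝ) ∂μ) ^ ((q - 2) / 2)).toReal :=
        ENNReal.toReal_mono (by finiteness) (hCu u hu h2u)
    _ ≤ _ := by
      rw [ENNReal.toReal_mul, ENNReal.toReal_mul, ENNReal.toReal_rpow]
      gcongr
      linarith

end Sobolev

theorem Real.rpow_mul_rpow_le_add_rpow {a b s t : ℝ} (ha : 0 ≤ a) (hb : 0 ≤ b) (hs : 0 ≤ s)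
    (ht : 0 ≤ t) : a ^ s * b ^ t ≤ (a + b) ^ (s + t) := by
  rw [Real.rpow_add_of_nonneg (by positivity) hs ht]
  gcongr <;> linarith

theorem rpow_one_div_le_of_le_mul_mul_rpow {q c p s d lam : ℝ} (hq : 2 ≤ q) (hc : 0 ≤ c)
    (hp : 0 ≤ p) (hs : 0 ≤ s) (hd : 0 ≤ d) (hlam : 0 < lam)
    (h : p ≤ c * s * d ^ ((q - 2) / 2)) :
    p ^ (1 / q) ≤ c ^ (1 / q) * lam ^ (-(1 / q)) * (d + lam * s) ^ ((1 : ℝ) / 2) := by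
  have hq₀ : 0 < q := by linarith
  have hs' : s ^ (1 / q) = lam ^ (-(1 / q)) * (lam * s) ^ (1 / q) := by
    rw [Real.mul_rpow hlam.le hs, ← mul_assoc, ← Real.rpow_add hlam, neg_add_cancel,
      Real.rpow_zero, one_mul]
  calc p ^ (1 / q) ≤ (c * s * d ^ ((q - 2) / 2)) ^ (1 / q) := by gcongr
    _ = c ^ (1 / q) * lam ^ (-(1 / q)) * ((lam * s) ^ (1 / q) * d ^ (1 / 2 - 1 / q)) := by
      rw [Real.mul_rpow (by positivity) (by positivity), Real.mul_rpow hc hs, ← Real.rpow_mul hd,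
        hs', show (q - 2) / 2 * (1 / q) = 1 / 2 - 1 / q by field_simp]
      ring
    _ ≤ c ^ (1 / q) * lam ^ (-(1 / q)) * (lam * s + d) ^ (1 / q + (1 / 2 - 1 / q)) := by
      gcongr
      refine Real.rpow_mul_rpow_le_add_rpow (by positivity) hd (by positivity) ?_
      rw [sub_nonneg]
      gcongr
    _ = c ^ (1 / q) * lam ^ (-(1 / q)) * (d + lam * s) ^ ((1 : ℝ) / 2) := by
      rw [add_comm (lam * s), add_sub_cancel]

theorem scaled_sobolev_inequality (q : ℝ) (hq : 2 ≤ q) :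
    ∃ C > (0:ℝ), ∀ lam : ℝ, 0 < lam →
      ∀ u : EuclideanSpace ℝ (Fin 2) → ℝ, ContDiff ℝ 1 u → HasCompactSupport u →
        (∫ x, |u x| ^ q) ^ (1 / q)
          ≤ C * lam ^ (-(1 / q))
            * (∫ x, (‖fderiv ℝ u x‖ ^ 2 + lam * (u x) ^ 2)) ^ ((1:ℝ) / 2) := by
  obtain ⟨c, hc, hGN⟩ := exists_integral_norm_rpow_le volume (F := ℝ) finrank_euclideanSpace_fin hq
  refine ⟨c ^ (1 / q), by positivity, fun lam hlam u hu h2u ↦ ?_⟩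
  have hu' := hu.continuous
  have hDu := hu.continuous_fderiv one_ne_zero
  have hsplit : ∫ x, (‖fderiv ℝ u x‖ ^ 2 + lam * u x ^ 2)
      = (∫ x, ‖fderiv ℝ u x‖ ^ 2) + lam * ∫ x, u x ^ 2 := by
    rw [integral_add, integral_const_mul]
    · exact (hDu.memLp_of_hasCompactSupport (h2u.fderiv ℝ)).integrable_norm_pow two_ne_zero
    · exact (hu'.memLp_of_hasCompactSupport h2u).integrable_sq.const_mul lam
  have h := hGN u hu h2u
  simp only [Real.norm_eq_abs, sq_abs] at h
  rw [hsplit]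
  exact rpow_one_div_le_of_le_mul_mul_rpow hq hc.le (by positivity) (by positivity)
    (by positivity) hlam h
end
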